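/- arXiv:1809.07226 — 6 statements merged into one kernel-verified Lean document; each statement's English description precedes it below -/
import Mathlib

section
/- Let d ≥ 1 be an integer, α ∈ (0,2), β ∈ (0,1), and suppose 0 < η ≤ α/(βd). Let G be a measurable kernel satisfying the lower heat-kernel bound, let V₀ : ℝ^d → [0,∞) be measurable and not almost everywhere zero, and let V : (0,∞) × ℝ^d → [0,∞] be a mild solution with initial data V₀. Then there exists t₀ > 0 such that V(t,x) = ∞ for all t > t₀ and all x ∈ ℝ^d. -/
/-!
Write `σ = βd/α` and `κ = β/α`, so that `|x| ~ t ^ κ` is the parabolic scaling. On the region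
`|x| ≤ 2 t ^ κ` the kernel is `≳ t ^ (-σ)`, hence the linear term gives `V(t, x) ≳ t ^ (-σ)` for
`|x| ≤ t ^ κ` and large `t`. Feeding this into the Duhamel term over `s ∈ (T₀, t/2)` and balls of
radius `s ^ κ` produces the integrand `s ^ σ · s ^ (-σ(1+η)) = s ^ (-ση) ≥ s⁻¹`, precisely because
`η ≤ α/(βd)`, so `V(t, x) ≳ log t · t ^ (-σ)`. For a large time `T` the resulting lower bound `a` on
`[T, 4T] × B(0, T ^ κ)` satisfies `a ^ η T ≫ 1` (again as `ση ≤ 1`), and iterating the Duhamel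
inequality on the windows `[2T - T/2ⁿ, 4T]` yields the lower bounds `a (4 ^ (1/η)) ^ n`. Thus
`V = ∞` on `[2T, 4T] × B(0, T ^ κ)`, and since `G > 0` one more application of the Duhamel term
makes `V` infinite at every later time and every point.
-/

open MeasureTheory ENNReal Set Metric Filter Module

section Kernel

variable {E : Type*} [NormedAddCommGroup E]

-- In the application `σ = βd/α` and `γ = d + α`.
def KernelLowerBound (G : ℝ → E → ℝ) (c σ β γ : ℝ) : Prop :=
  ∀ t, 0 < t → ∀ z, c * min (t ^ (-σ)) (t ^ β / ‖z‖ ^ γ) ≤ G t z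

namespace KernelLowerBound

variable {G : ℝ → E → ℝ} {c σ β γ : ℝ}

theorem mul_min_le_of_mem_Icc (hG : KernelLowerBound G c σ β γ) (hc : 0 ≤ c) (hσ : 0 ≤ σ)
    (hβ : 0 ≤ β) (hγ : 0 ≤ γ) {τ₁ τ τ₂ ρ : ℝ} (hτ₁ : 0 < τ₁) (hτ : τ ∈ Icc τ₁ τ₂) {z : E}
    (hz : 0 < ‖z‖) (hzρ : ‖z‖ ≤ ρ) : c * min (τ₂ ^ (-σ)) (τ₁ ^ β / ρ ^ γ) ≤ G τ z := by
  have hτ0 : 0 < τ := hτ₁.trans_le hτ.1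
  refine le_trans (mul_le_mul_of_nonneg_left (min_le_min ?_ ?_) hc) (hG τ hτ0 z)
  · exact Real.rpow_le_rpow_of_nonpos hτ0 hτ.2 (neg_nonpos.2 hσ)
  · exact div_le_div₀ (by positivity) (Real.rpow_le_rpow hτ₁.le hτ.1 hβ)
      (Real.rpow_pos_of_pos hz _) (Real.rpow_le_rpow hz.le hzρ hγ)

theorem mul_rpow_neg_le (hG : KernelLowerBound G c σ β γ) (hc : 0 ≤ c) (hσ : 0 ≤ σ)
    (hβ : 0 ≤ β) (hγ : 0 ≤ γ) {κ : ℝ} (hκγ : κ * γ = σ + β) {T lo hi τ : ℝ} (hT : 0 < T)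
    (hlo : 0 < lo) (hτ : τ ∈ Icc (lo * T) (hi * T)) {z : E} (hz : 0 < ‖z‖)
    (hzT : ‖z‖ ≤ 2 * T ^ κ) : c * min (hi ^ (-σ)) (lo ^ β / 2 ^ γ) * T ^ (-σ) ≤ G τ z := by
  have hhi : 0 < hi := hlo.trans_le (le_of_mul_le_mul_right (hτ.1.trans hτ.2) hT)
  have hdiag : (hi * T) ^ (-σ) = hi ^ (-σ) * T ^ (-σ) := Real.mul_rpow hhi.le hT.le
  have hoff : (lo * T) ^ β / (2 * T ^ κ) ^ γ = lo ^ β / 2 ^ γ * T ^ (-σ) := by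
    rw [Real.mul_rpow hlo.le hT.le, Real.mul_rpow zero_le_two (by positivity),
      ← Real.rpow_mul hT.le, hκγ, Real.rpow_add hT, Real.rpow_neg hT.le]
    field_simp
  have := hG.mul_min_le_of_mem_Icc hc hσ hβ hγ (mul_pos hlo hT) hτ hz hzT
  rwa [hdiag, hoff, ← min_mul_of_nonneg _ _ (by positivity), ← mul_assoc] at this

theorem pos (hG : KernelLowerBound G c σ β γ) (hc : 0 < c) {τ : ℝ} (hτ : 0 < τ) {z : E}
    (hz : z ≠ 0) : 0 < G τ z := by
  refine lt_of_lt_of_le (mul_pos hc (lt_min ?_ ?_)) (hG τ hτ z) <;> positivity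

end KernelLowerBound

end Kernel

theorem mul_measure_le_lintegral_of_forall_ne {α : Type*} [MeasurableSpace α] {μ : Measure α}
    [NullSingletonClass μ] {A : Set α} (hA : MeasurableSet A) (x : α) {c : ℝ≥0∞}
    {f : α → ℝ≥0∞} (h : ∀ y ∈ A, y ≠ x → c ≤ f y) : c * μ A ≤ ∫⁻ y, f y ∂μ := by
  have hx : ∀ᵐ y ∂μ, y ≠ x := by simp [ae_iff, measure_singleton]
  calc c * μ A = ∫⁻ _ in A, c ∂μ := (setLIntegral_const _ _).symm
    _ ≤ ∫⁻ y in A, f y ∂μ := lintegral_mono_ae <|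
        ((ae_restrict_of_ae hx).and (ae_restrict_mem hA)).mono fun y hy => h y hy.2 hy.1
    _ ≤ ∫⁻ y, f y ∂μ := setLIntegral_le_lintegral _ _

theorem setLIntegral_Ioo_ofReal_inv {a b : ℝ} (ha : 0 < a) (hab : a ≤ b) :
    ∫⁻ s in Ioo a b, ENNReal.ofReal s⁻¹ = ENNReal.ofReal (Real.log (b / a)) := by
  have hint : IntegrableOn (fun s : ℝ => s⁻¹) (Ioo a b) :=
    ((continuousOn_inv₀.mono fun s hs => (ha.trans_le hs.1).ne').integrableOn_Icc).mono_set
      Ioo_subset_Icc_self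
  rw [← ofReal_integral_eq_lintegral_ofReal hint
    (ae_restrict_of_forall_mem measurableSet_Ioo fun s hs => inv_nonneg.2 (ha.trans hs.1).le),
    ← integral_Ioc_eq_integral_Ioo, ← intervalIntegral.integral_of_le hab,
    integral_inv_of_pos ha (ha.trans_le hab)]

theorem exists_measure_ne_zero_norm_le_and_le {E : Type*} [NormedAddCommGroup E]
    [MeasurableSpace E] {μ : Measure E} {f : E → ℝ} (hf0 : 0 ≤ f) (hf : ¬ f =ᵐ[μ] 0) :
    ∃ ε R : ℝ, 0 < ε ∧ 0 < R ∧ μ {x | ‖x‖ ≤ R ∧ ε ≤ f x} ≠ 0 := by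
  by_contra! h
  refine hf (measure_mono_null (fun x (hx : f x ≠ 0) => ?_)
    (measure_iUnion_null fun n : ℕ => h (1 / (n + 1)) (n + 1) (by positivity) (by positivity)))
  have hfx : 0 < f x := (hf0 x).lt_of_ne' hx
  obtain ⟨n, hn⟩ := exists_nat_gt (max ‖x‖ (1 / f x))
  rw [max_lt_iff] at hn
  exact mem_iUnion.2 ⟨n, by linarith, (one_div_le (by positivity) hfx).2 (by linarith)⟩

section Duhamel

variable {E : Type*} [NormedAddCommGroup E] [MeasureSpace E]

def IsDuhamelSupersolution (G : ℝ → E → ℝ) (p : ℝ) (V : ℝ → E → ℝ≥0∞) : Prop :=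
  ∀ t, 0 < t → ∀ x,
    ∫⁻ s in Ioo 0 t, ∫⁻ y, ENNReal.ofReal (G (t - s) (x - y)) * V s y ^ p ≤ V t x

variable {G : ℝ → E → ℝ} {p : ℝ} {V : ℝ → E → ℝ≥0∞}

theorem ofReal_mul_rpow_mul_volume_ball_le_lintegral [OpensMeasurableSpace E]
    [NullSingletonClass (volume : Measure E)] {U : E → ℝ≥0∞} {τ k R ρ : ℝ} {a : ℝ≥0∞}
    (hp : 0 ≤ p) {x : E} (hx : ‖x‖ ≤ R) (hk : ∀ z : E, 0 < ‖z‖ → ‖z‖ ≤ R + ρ → k ≤ G τ z)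
    (hU : ∀ y ∈ ball (0 : E) ρ, a ≤ U y) :
    ENNReal.ofReal k * a ^ p * volume (ball (0 : E) ρ) ≤
      ∫⁻ y, ENNReal.ofReal (G τ (x - y)) * U y ^ p := by
  refine mul_measure_le_lintegral_of_forall_ne measurableSet_ball x fun y hy hyx => ?_
  have hxy : 0 < ‖x - y‖ := norm_pos_iff.2 (sub_ne_zero.2 hyx.symm)
  have hxyR : ‖x - y‖ ≤ R + ρ := by
    linarith [norm_sub_le x y, mem_ball_zero_iff.1 hy]
  exact mul_le_mul' (ENNReal.ofReal_le_ofReal (hk _ hxy hxyR)) (ENNReal.rpow_le_rpow (hU y hy) hp)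

namespace IsDuhamelSupersolution

theorem setLIntegral_le (hV : IsDuhamelSupersolution G p V) {s₁ s₂ t : ℝ} (hs₁ : 0 ≤ s₁)
    (hs : s₁ < s₂) (hst : s₂ ≤ t) (x : E) {g : ℝ → ℝ≥0∞}
    (hg : ∀ s ∈ Ioo s₁ s₂, g s ≤ ∫⁻ y, ENNReal.ofReal (G (t - s) (x - y)) * V s y ^ p) :
    ∫⁻ s in Ioo s₁ s₂, g s ≤ V t x :=
  calc ∫⁻ s in Ioo s₁ s₂, g s
      ≤ ∫⁻ s in Ioo s₁ s₂, ∫⁻ y, ENNReal.ofReal (G (t - s) (x - y)) * V s y ^ p :=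
        setLIntegral_mono' measurableSet_Ioo hg
    _ ≤ ∫⁻ s in Ioo 0 t, ∫⁻ y, ENNReal.ofReal (G (t - s) (x - y)) * V s y ^ p :=
        lintegral_mono_set (Ioo_subset_Ioo hs₁ hst)
    _ ≤ V t x := hV t (by linarith) x

theorem le_of_le_on_slab [OpensMeasurableSpace E] [NullSingletonClass (volume : Measure E)]
    (hV : IsDuhamelSupersolution G p V) (hp : 0 ≤ p) {s₁ s₂ t R ρ k : ℝ} (hs₁ : 0 ≤ s₁)
    (hs : s₁ < s₂) (hst : s₂ ≤ t) {x : E} (hx : ‖x‖ ≤ R) {a : ℝ≥0∞}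
    (hk : ∀ τ ∈ Icc (t - s₂) (t - s₁), ∀ z : E, 0 < ‖z‖ → ‖z‖ ≤ R + ρ → k ≤ G τ z)
    (ha : ∀ s ∈ Icc s₁ s₂, ∀ y ∈ ball (0 : E) ρ, a ≤ V s y) :
    ENNReal.ofReal k * a ^ p * volume (ball (0 : E) ρ) * ENNReal.ofReal (s₂ - s₁) ≤ V t x := by
  rw [← Real.volume_Ioo, ← setLIntegral_const]
  refine hV.setLIntegral_le hs₁ hs hst x fun s hs => ?_
  exact ofReal_mul_rpow_mul_volume_ball_le_lintegral hp hx
    (hk (t - s) ⟨by linarith [hs.2], by linarith [hs.1]⟩) (ha s (Ioo_subset_Icc_self hs))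

theorem eq_top_of_eq_top_on_slab [NullSingletonClass (volume : Measure E)]
    (hV : IsDuhamelSupersolution G p V) (hG : ∀ τ, 0 < τ → ∀ z : E, z ≠ 0 → 0 < G τ z)
    (hp : 0 < p) {s₁ s₂ t : ℝ} (hs₁ : 0 ≤ s₁) (hs : s₁ < s₂) (ht : s₁ < t) {A : Set E}
    (hA : MeasurableSet A) (hA0 : volume A ≠ 0) (htop : ∀ s ∈ Ioo s₁ s₂, ∀ y ∈ A, V s y = ⊤)
    (x : E) : V t x = ⊤ := by
  have hs' : s₁ < min s₂ t := lt_min hs ht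
  refine top_le_iff.1 (le_trans ?_ (hV.setLIntegral_le hs₁ hs' (min_le_right _ _) x
    (g := fun _ => ⊤) fun s hs => ?_))
  · rw [setLIntegral_const, Real.volume_Ioo, top_mul (ofReal_pos.2 (sub_pos.2 hs')).ne']
  · rw [← top_mul hA0]
    refine mul_measure_le_lintegral_of_forall_ne hA x fun y hy hyx => ?_
    have hGpos := hG (t - s) (by linarith [hs.2, min_le_right s₂ t]) (x - y)
      (sub_ne_zero.2 hyx.symm)
    rw [htop s ⟨hs.1, hs.2.trans_le (min_le_left _ _)⟩ y hy, top_rpow_of_pos hp,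
      mul_top (ofReal_pos.2 hGpos).ne']

end IsDuhamelSupersolution

end Duhamel

theorem mul_pow_succ_le_rpow_mul {a K η : ℝ} (ha : 0 < a) (hη : 0 < η)
    (hK : 16 * 4 ^ η⁻¹ ≤ a ^ η * K) (n : ℕ) :
    a * (4 ^ η⁻¹) ^ (n + 1) ≤ (a * (4 ^ η⁻¹) ^ n) ^ (1 + η) * K * (2⁻¹ ^ (n + 2)) ^ 2 := by
  set Q : ℝ := 4 ^ η⁻¹
  have hQ : 0 < Q := by positivity
  have hQη : (Q ^ n) ^ η = 4 ^ n := by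
    rw [← Real.rpow_natCast, ← Real.rpow_mul hQ.le, mul_comm, Real.rpow_mul hQ.le,
      ← Real.rpow_mul zero_le_four, inv_mul_cancel₀ hη.ne', Real.rpow_one, Real.rpow_natCast]
  have hpow : (a * Q ^ n) ^ (1 + η) = a * Q ^ n * (a ^ η * 4 ^ n) := by
    rw [Real.rpow_add (by positivity), Real.rpow_one, Real.mul_rpow ha.le (by positivity), hQη]
  have hscale : (4 : ℝ) ^ n * (2⁻¹ ^ (n + 2)) ^ 2 = 16⁻¹ := by
    rw [← pow_mul, show (n + 2) * 2 = 2 * n + 4 by ring, pow_add, pow_mul, ← mul_assoc,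
      ← mul_pow]
    norm_num
  calc a * Q ^ (n + 1) = a * Q ^ n * Q := by ring
    _ ≤ a * Q ^ n * (a ^ η * K * 16⁻¹) :=
        mul_le_mul_of_nonneg_left (by linarith) (by positivity)
    _ = (a * Q ^ n) ^ (1 + η) * K * (2⁻¹ ^ (n + 2)) ^ 2 := by
        rw [hpow, ← hscale]
        ring

theorem exists_le_on_window {E : Type*} [NormedAddCommGroup E] {V : ℝ → E → ℝ≥0∞}
    {σ κ η B T₀ : ℝ} (hσ : 0 ≤ σ) (hκ : 0 ≤ κ) (hη : 0 < η) (hση : σ * η ≤ 1) (hB : 0 < B)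
    (hT₀ : 1 ≤ T₀) (hBV : ∀ t, 4 * T₀ ≤ t → ∀ x : E, ‖x‖ ≤ t ^ κ →
      ENNReal.ofReal (B * Real.log (t / (2 * T₀)) * t ^ (-σ)) ≤ V t x) (K : ℝ) :
    ∃ T a : ℝ, 1 ≤ T ∧ 0 < a ∧ K ≤ a ^ η * T ∧
      ∀ t ∈ Icc T (4 * T), ∀ x : E, ‖x‖ ≤ T ^ κ → ENNReal.ofReal a ≤ V t x := by
  obtain ⟨M, hM1, hMK⟩ : ∃ M : ℝ, 1 ≤ M ∧ 4 * K / B ^ η ≤ M ^ η :=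
    ((eventually_ge_atTop 1).and ((tendsto_rpow_atTop hη).eventually_ge_atTop _)).exists
  set T := 2 * T₀ * Real.exp M
  have hT4 : 4 * T₀ ≤ T := by nlinarith [Real.add_one_le_exp M]
  have hT : 0 < T := by positivity
  refine ⟨T, B * M * (4 * T) ^ (-σ), by linarith, by positivity, ?_, fun t ht x hx => ?_⟩
  · have hpow : (B * M * (4 * T) ^ (-σ)) ^ η = B ^ η * M ^ η * (4 * T) ^ (-(σ * η)) := by
      rw [Real.mul_rpow (by positivity) (by positivity), Real.mul_rpow hB.le (by positivity),
        ← Real.rpow_mul (by positivity)]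
      ring_nf
    have hdecay : (4 * T)⁻¹ ≤ (4 * T) ^ (-(σ * η)) := by
      rw [← Real.rpow_neg_one]
      exact Real.rpow_le_rpow_of_exponent_le (by linarith) (by linarith)
    rw [div_le_iff₀ (by positivity)] at hMK
    calc K ≤ B ^ η * M ^ η * ((4 * T)⁻¹ * T) := by
          rw [show (4 * T)⁻¹ * T = 4⁻¹ by field_simp]
          linarith
      _ ≤ B ^ η * M ^ η * ((4 * T) ^ (-(σ * η)) * T) := by gcongr
      _ = (B * M * (4 * T) ^ (-σ)) ^ η * T := by rw [hpow]; ring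
  · have ht0 : 0 < t := hT.trans_le ht.1
    have hlog : M ≤ Real.log (t / (2 * T₀)) := by
      rw [Real.le_log_iff_exp_le (by positivity), le_div_iff₀ (by positivity)]
      linarith [ht.1]
    have hdecay : (4 * T) ^ (-σ) ≤ t ^ (-σ) :=
      Real.rpow_le_rpow_of_nonpos ht0 ht.2 (by linarith)
    refine le_trans (ENNReal.ofReal_le_ofReal ?_)
      (hBV t (hT4.trans ht.1) x (hx.trans (Real.rpow_le_rpow hT.le ht.1 hκ)))
    have hB' : 0 ≤ B * Real.log (t / (2 * T₀)) := mul_nonneg hB.le (by linarith)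
    gcongr

section Parabolic

variable {E : Type*} [NormedAddCommGroup E] [NormedSpace ℝ E] [FiniteDimensional ℝ E]
  [Nontrivial E] [MeasureSpace E] [BorelSpace E] [(volume : Measure E).IsAddHaarMeasure]
  {G : ℝ → E → ℝ} {V : ℝ → E → ℝ≥0∞} {c σ β γ κ η : ℝ}

theorem volume_ball_rpow (hκd : κ * finrank ℝ E = σ) {T : ℝ} (hT : 0 < T) :
    volume (ball (0 : E) (T ^ κ)) = ENNReal.ofReal (T ^ σ * (volume (ball (0 : E) 1)).toReal) := by
  rw [Measure.addHaar_ball _ _ (by positivity), ← Real.rpow_natCast, ← Real.rpow_mul hT.le, hκd,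
    ofReal_mul (by positivity), ofReal_toReal measure_ball_lt_top.ne]

theorem exists_rpow_neg_le_of_linear (hG : KernelLowerBound G c σ β γ) (hc : 0 < c)
    (hσ : 0 ≤ σ) (hβ : 0 ≤ β) (hγ : 0 ≤ γ) (hκ : 0 < κ) (hκγ : κ * γ = σ + β) {V₀ : E → ℝ}
    (hlin : ∀ t, 0 < t → ∀ x, ∫⁻ y, ENNReal.ofReal (G t (x - y)) * ENNReal.ofReal (V₀ y) ≤ V t x)
    (hV₀ : Measurable V₀) (hV₀0 : 0 ≤ V₀) (hV₀ne : ¬ V₀ =ᵐ[volume] 0) :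
    ∃ A T₀ : ℝ, 0 < A ∧ 1 ≤ T₀ ∧
      ∀ t, T₀ ≤ t → ∀ x : E, ‖x‖ ≤ t ^ κ → ENNReal.ofReal (A * t ^ (-σ)) ≤ V t x := by
  obtain ⟨ε, R, hε, hR, hS0⟩ := exists_measure_ne_zero_norm_le_and_le hV₀0 hV₀ne
  set S := {y : E | ‖y‖ ≤ R ∧ ε ≤ V₀ y}
  have hS : MeasurableSet S :=
    (measurableSet_le measurable_norm measurable_const).inter
      (measurableSet_le measurable_const hV₀)
  have hSfin : volume S ≠ ⊤ :=
    ((measure_mono fun y hy => mem_closedBall_zero_iff.2 hy.1).trans_lt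
      measure_closedBall_lt_top).ne
  have hS0' : 0 < (volume S).toReal := toReal_pos hS0 hSfin
  set c₃ : ℝ := min 1 (2⁻¹ ^ β / 2 ^ γ)
  have hc₃ : 0 < c₃ := lt_min one_pos (by positivity)
  refine ⟨c * c₃ * ε * (volume S).toReal, max 1 (R ^ κ⁻¹), by positivity, le_max_left _ _,
    fun t ht x hx => ?_⟩
  have ht0 : 0 < t := one_pos.trans_le ((le_max_left _ _).trans ht)
  have hRt : R ≤ t ^ κ := by
    calc R = (R ^ κ⁻¹) ^ κ := by rw [← Real.rpow_mul hR.le, inv_mul_cancel₀ hκ.ne', Real.rpow_one]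
      _ ≤ t ^ κ := Real.rpow_le_rpow (by positivity) ((le_max_right _ _).trans ht) hκ.le
  have hpt : ∀ y ∈ S, y ≠ x → ENNReal.ofReal (c * c₃ * t ^ (-σ)) * ENNReal.ofReal ε ≤
      ENNReal.ofReal (G t (x - y)) * ENNReal.ofReal (V₀ y) := by
    intro y hy hyx
    have hGt := hG.mul_rpow_neg_le hc.le hσ hβ hγ hκγ ht0 (lo := 2⁻¹) (hi := 1) (τ := t)
      (by norm_num) ⟨by linarith, by linarith⟩ (norm_pos_iff.2 (sub_ne_zero.2 hyx.symm))
      (by linarith [norm_sub_le x y, hy.1])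
    rw [Real.one_rpow] at hGt
    exact mul_le_mul' (ENNReal.ofReal_le_ofReal hGt) (ENNReal.ofReal_le_ofReal hy.2)
  calc ENNReal.ofReal (c * c₃ * ε * (volume S).toReal * t ^ (-σ))
      = ENNReal.ofReal (c * c₃ * t ^ (-σ)) * ENNReal.ofReal ε * volume S := by
        rw [← ofReal_mul (by positivity), ← ofReal_toReal hSfin, ← ofReal_mul (by positivity),
          ofReal_toReal hSfin]
        ring_nf
    _ ≤ ∫⁻ y, ENNReal.ofReal (G t (x - y)) * ENNReal.ofReal (V₀ y) :=
        mul_measure_le_lintegral_of_forall_ne hS x hpt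
    _ ≤ V t x := hlin t ht0 x

theorem exists_log_mul_rpow_neg_le (hG : KernelLowerBound G c σ β γ) (hc : 0 < c)
    (hσ : 0 ≤ σ) (hβ : 0 ≤ β) (hγ : 0 ≤ γ) (hκ : 0 < κ) (hκγ : κ * γ = σ + β)
    (hκd : κ * finrank ℝ E = σ) (hη : 0 ≤ η) (hση : σ * η ≤ 1)
    (hV : IsDuhamelSupersolution G (1 + η) V) {A T₀ : ℝ} (hA : 0 < A) (hT₀ : 1 ≤ T₀)
    (hAV : ∀ t, T₀ ≤ t → ∀ x : E, ‖x‖ ≤ t ^ κ → ENNReal.ofReal (A * t ^ (-σ)) ≤ V t x) :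
    ∃ B : ℝ, 0 < B ∧ ∀ t, 4 * T₀ ≤ t → ∀ x : E, ‖x‖ ≤ t ^ κ →
      ENNReal.ofReal (B * Real.log (t / (2 * T₀)) * t ^ (-σ)) ≤ V t x := by
  set c₃ : ℝ := min 1 (2⁻¹ ^ β / 2 ^ γ)
  have hc₃ : 0 < c₃ := lt_min one_pos (by positivity)
  set vB := (volume (ball (0 : E) 1)).toReal
  have hvB : 0 < vB := toReal_pos (measure_ball_pos _ _ one_pos).ne' measure_ball_lt_top.ne
  refine ⟨c * c₃ * A ^ (1 + η) * vB, by positivity, fun t ht x hx => ?_⟩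
  have ht0 : 0 < t := by linarith
  have hT₀t : T₀ < t / 2 := by linarith
  calc ENNReal.ofReal (c * c₃ * A ^ (1 + η) * vB * Real.log (t / (2 * T₀)) * t ^ (-σ))
      = ∫⁻ s in Ioo T₀ (t / 2),
          ENNReal.ofReal (c * c₃ * A ^ (1 + η) * vB * t ^ (-σ)) * ENNReal.ofReal s⁻¹ := by
        rw [lintegral_const_mul' _ _ ofReal_ne_top,
          setLIntegral_Ioo_ofReal_inv (by linarith) hT₀t.le, ← ofReal_mul (by positivity),
          div_div]
        ring_nf
    _ ≤ V t x := hV.setLIntegral_le (by linarith) hT₀t (by linarith) x fun s hs => ?_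
  have hs0 : 0 < s := by linarith [hs.1]
  have hst : s ^ κ ≤ t ^ κ := Real.rpow_le_rpow hs0.le (by linarith [hs.2]) hκ.le
  have hk : ∀ z : E, 0 < ‖z‖ → ‖z‖ ≤ t ^ κ + s ^ κ → c * c₃ * t ^ (-σ) ≤ G (t - s) z := by
    intro z hz hzt
    have hGt := hG.mul_rpow_neg_le hc.le hσ hβ hγ hκγ ht0 (lo := 2⁻¹) (hi := 1) (τ := t - s)
      (by norm_num) ⟨by linarith [hs.2], by linarith [hs.1]⟩ hz (by linarith)
    rwa [Real.one_rpow] at hGt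
  have hU : ∀ y ∈ ball (0 : E) (s ^ κ), ENNReal.ofReal (A * s ^ (-σ)) ≤ V s y :=
    fun y hy => hAV s hs.1.le y (mem_ball_zero_iff.1 hy).le
  refine le_trans ?_ (ofReal_mul_rpow_mul_volume_ball_le_lintegral (by linarith) hx hk hU)
  have hdecay : (A * s ^ (-σ)) ^ (1 + η) * s ^ σ = A ^ (1 + η) * s ^ (-(σ * η)) := by
    rw [Real.mul_rpow hA.le (by positivity), ← Real.rpow_mul hs0.le, mul_assoc, ← Real.rpow_add hs0]
    ring_nf
  have hgain : s⁻¹ ≤ s ^ (-(σ * η)) := by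
    rw [← Real.rpow_neg_one]
    exact Real.rpow_le_rpow_of_exponent_le (by linarith [hs.1]) (by linarith)
  rw [volume_ball_rpow hκd hs0, ofReal_rpow_of_nonneg (by positivity) (by linarith),
    ← ofReal_mul (by positivity), ← ofReal_mul (by positivity), ← ofReal_mul (by positivity)]
  refine ENNReal.ofReal_le_ofReal ?_
  calc c * c₃ * A ^ (1 + η) * vB * t ^ (-σ) * s⁻¹
      ≤ c * c₃ * A ^ (1 + η) * vB * t ^ (-σ) * s ^ (-(σ * η)) :=
        mul_le_mul_of_nonneg_left hgain (by positivity)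
    _ = c * c₃ * t ^ (-σ) * (A * s ^ (-σ)) ^ (1 + η) * (s ^ σ * vB) := by
        rw [← mul_assoc _ (s ^ σ), mul_assoc (c * c₃ * t ^ (-σ)), hdecay]
        ring

theorem IsDuhamelSupersolution.le_of_le_on_window (hV : IsDuhamelSupersolution G (1 + η) V)
    (hG : KernelLowerBound G c σ β γ) (hc : 0 < c) (hσ : 0 ≤ σ) (hβ : 0 ≤ β) (hβ1 : β ≤ 1)
    (hγ : 0 ≤ γ) (hκγ : κ * γ = σ + β) (hκd : κ * finrank ℝ E = σ) (hη : 0 ≤ η)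
    {T p s₁ t a : ℝ} (hT : 0 < T) (hp : 0 < p) (hp1 : p ≤ 1) (hs₁ : T ≤ s₁)
    (ht : s₁ + 2 * p * T ≤ t) (ht4 : t ≤ 4 * T) (ha : 0 ≤ a)
    (hVa : ∀ s ∈ Icc s₁ (s₁ + p * T), ∀ y : E, ‖y‖ ≤ T ^ κ → ENNReal.ofReal a ≤ V s y)
    {x : E} (hx : ‖x‖ ≤ T ^ κ) :
    ENNReal.ofReal (a ^ (1 + η) *
      (c * min (3 ^ (-σ)) (2 ^ γ)⁻¹ * (volume (ball (0 : E) 1)).toReal * T) * p ^ 2) ≤ V t x := by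
  set m₀ : ℝ := min (3 ^ (-σ)) (2 ^ γ)⁻¹
  have hm₀ : 0 < m₀ := lt_min (by positivity) (by positivity)
  have hk : ∀ τ ∈ Icc (t - (s₁ + p * T)) (t - s₁), ∀ z : E, 0 < ‖z‖ → ‖z‖ ≤ T ^ κ + T ^ κ →
      c * m₀ * p * T ^ (-σ) ≤ G τ z := by
    intro τ hτ z hz hzT
    refine le_trans ?_ (hG.mul_rpow_neg_le hc.le hσ hβ hγ hκγ hT (lo := p) (hi := 3) hp
      ⟨by linarith [hτ.1], by linarith [hτ.2]⟩ hz (by linarith))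
    have hpβ : p ≤ p ^ β := by
      simpa using Real.rpow_le_rpow_of_exponent_ge hp hp1 hβ1
    have hm₀p : m₀ * p ≤ min (3 ^ (-σ)) (p ^ β / 2 ^ γ) := by
      refine le_min ?_ ?_
      · nlinarith [min_le_left (3 ^ (-σ) : ℝ) (2 ^ γ)⁻¹]
      · rw [div_eq_mul_inv, mul_comm (p ^ β)]
        nlinarith [min_le_right (3 ^ (-σ) : ℝ) (2 ^ γ)⁻¹, inv_pos.2 (by positivity : (0:ℝ) < 2 ^ γ)]
    rw [mul_assoc c m₀ p]
    gcongr
  have hslab := hV.le_of_le_on_slab (by linarith) (by linarith) (by nlinarith) (by nlinarith) hx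
    hk fun s hs y hy => hVa s hs y (mem_ball_zero_iff.1 hy).le
  refine le_trans (le_of_eq ?_) hslab
  have hTT : T ^ (-σ) * T ^ σ = 1 := by
    rw [← Real.rpow_add hT, neg_add_cancel, Real.rpow_zero]
  rw [volume_ball_rpow hκd hT, ofReal_rpow_of_nonneg ha (by linarith), ← ofReal_mul (by positivity),
    ← ofReal_mul (by positivity), ← ofReal_mul (by positivity)]
  congr 1
  linear_combination (-(a ^ (1 + η)) * c * m₀ * (volume (ball (0 : E) 1)).toReal * T * p ^ 2) * hTT

theorem IsDuhamelSupersolution.exists_eq_top_on_window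
    (hV : IsDuhamelSupersolution G (1 + η) V) (hG : KernelLowerBound G c σ β γ) (hc : 0 < c)
    (hσ : 0 ≤ σ) (hβ : 0 ≤ β) (hβ1 : β ≤ 1) (hγ : 0 ≤ γ) (hκ : 0 ≤ κ) (hκγ : κ * γ = σ + β)
    (hκd : κ * finrank ℝ E = σ) (hη : 0 < η) (hση : σ * η ≤ 1) {B T₀ : ℝ} (hB : 0 < B)
    (hT₀ : 1 ≤ T₀) (hBV : ∀ t, 4 * T₀ ≤ t → ∀ x : E, ‖x‖ ≤ t ^ κ →
      ENNReal.ofReal (B * Real.log (t / (2 * T₀)) * t ^ (-σ)) ≤ V t x) :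
    ∃ T : ℝ, 0 < T ∧ ∀ t ∈ Icc (2 * T) (4 * T), ∀ x : E, ‖x‖ ≤ T ^ κ → V t x = ⊤ := by
  set L : ℝ := c * min (3 ^ (-σ)) (2 ^ γ)⁻¹ * (volume (ball (0 : E) 1)).toReal
  have hL : 0 < L := mul_pos (mul_pos hc (lt_min (by positivity) (by positivity)))
    (toReal_pos (measure_ball_pos _ _ one_pos).ne' measure_ball_lt_top.ne)
  set Q : ℝ := 4 ^ η⁻¹
  obtain ⟨T, a, hT, ha, hK, hwin⟩ :=
    exists_le_on_window hσ hκ hη hση hB hT₀ hBV (16 * Q / L)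
  rw [div_le_iff₀ hL] at hK
  -- Step `n + 1` uses the slab `[s, s + T/2^(n+2)]`, `s = 2T - T/2ⁿ`; the factor `4⁻¹ ^ n` this
  -- costs is recovered from `(Q ^ n) ^ η = 4 ^ n`.
  have hiter : ∀ n : ℕ, ∀ t ∈ Icc (2 * T - T * 2⁻¹ ^ n) (4 * T), ∀ x : E, ‖x‖ ≤ T ^ κ →
      ENNReal.ofReal (a * Q ^ n) ≤ V t x := by
    intro n
    induction n with
    | zero => simpa [two_mul] using hwin
    | succ n ih =>
      intro t ht x hx
      have hq : (2⁻¹ : ℝ) ^ n ≤ 1 := pow_le_one₀ (by norm_num) (by norm_num)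
      have hq0 : (0 : ℝ) < 2⁻¹ ^ n := by positivity
      have hq1 : (2⁻¹ : ℝ) ^ (n + 1) = 2⁻¹ ^ n / 2 := by rw [pow_succ]; ring
      have hq2 : (2⁻¹ : ℝ) ^ (n + 2) = 2⁻¹ ^ n / 4 := by rw [pow_add]; norm_num; ring
      refine le_trans (ENNReal.ofReal_le_ofReal
        (mul_pow_succ_le_rpow_mul (K := L * T) ha hη (by linarith) n)) ?_
      refine hV.le_of_le_on_window hG hc hσ hβ hβ1 hγ hκγ hκd hη.le (by linarith)
        (by positivity) (pow_le_one₀ (by norm_num) (by norm_num)) ?_ ?_ ht.2 (by positivity)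
        (fun s hs y hy => ih s ⟨hs.1, ?_⟩ y hy) hx
      · nlinarith
      · rw [hq2]; rw [hq1] at ht; nlinarith [ht.1]
      · rw [hq2] at hs; nlinarith [hs.2]
  have hQ : 1 < Q := Real.one_lt_rpow (by norm_num) (by positivity)
  refine ⟨T, by linarith, fun t ht x hx => top_le_iff.1 (le_of_tendsto'
    (ENNReal.tendsto_ofReal_atTop.comp ((tendsto_pow_atTop_atTop_of_one_lt hQ).const_mul_atTop ha))
    fun n => hiter n t ⟨?_, ht.2⟩ x hx)⟩
  nlinarith [ht.1, (pow_pos (by norm_num : (0 : ℝ) < 2⁻¹) n)]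

end Parabolic

theorem no_global_solution_subcritical_general
    (d : ℕ) (hd : 1 ≤ d) (α β η : ℝ)
    (hα : α ∈ Set.Ioo (0 : ℝ) 2) (hβ : β ∈ Set.Ioo (0 : ℝ) 1)
    (hη : 0 < η) (hηc : η ≤ α / (β * d))
    (G : ℝ → EuclideanSpace ℝ (Fin d) → ℝ)
    (c₁ : ℝ) (hc₁ : 0 < c₁)
    (hGlower : ∀ t : ℝ, 0 < t → ∀ x : EuclideanSpace ℝ (Fin d),
      c₁ * min (t ^ (-(β * d) / α)) (t ^ β / ‖x‖ ^ ((d : ℝ) + α)) ≤ G t x)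
    (V₀ : EuclideanSpace ℝ (Fin d) → ℝ)
    (hV₀meas : Measurable V₀) (hV₀nonneg : ∀ x, 0 ≤ V₀ x)
    (hV₀ne : ¬ (V₀ =ᵐ[volume] 0))
    (V : ℝ → EuclideanSpace ℝ (Fin d) → ℝ≥0∞)
    (hmild : ∀ t : ℝ, 0 < t → ∀ x : EuclideanSpace ℝ (Fin d),
      V t x
        = (∫⁻ y, ENNReal.ofReal (G t (x - y)) * ENNReal.ofReal (V₀ y))
          + ∫⁻ s in Set.Ioo (0 : ℝ) t,
              ∫⁻ y, ENNReal.ofReal (G (t - s) (x - y)) * (V s y) ^ (1 + η)) :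
    ∃ t₀ : ℝ, 0 < t₀ ∧ ∀ t : ℝ, t₀ < t → ∀ x : EuclideanSpace ℝ (Fin d), V t x = ∞ := by
  obtain ⟨hα, -⟩ := hα
  obtain ⟨hβ, hβ1⟩ := hβ
  have : NeZero d := ⟨by omega⟩
  set σ := β * d / α with hσdef
  have hσ : 0 ≤ σ := by positivity
  have hG : KernelLowerBound G c₁ σ β (d + α) := fun t ht z => by
    simpa only [neg_div] using hGlower t ht z
  have hκγ : β / α * (d + α) = σ + β := by rw [hσdef]; field_simp
  have hκd : β / α * finrank ℝ (EuclideanSpace ℝ (Fin d)) = σ := by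
    rw [finrank_euclideanSpace_fin]; ring
  have hση : σ * η ≤ 1 := by
    rwa [hσdef, div_mul_eq_mul_div, div_le_one hα, ← le_div_iff₀' (by positivity)]
  have hV : IsDuhamelSupersolution G (1 + η) V := fun t ht x => (hmild t ht x).ge.trans' le_add_self
  obtain ⟨A, T₀, hA, hT₀, hAV⟩ := exists_rpow_neg_le_of_linear hG hc₁ hσ hβ.le (by positivity)
    (by positivity) hκγ (fun t ht x => (hmild t ht x).ge.trans' le_self_add) hV₀meas hV₀nonneg hV₀ne
  obtain ⟨B, hB, hBV⟩ := exists_log_mul_rpow_neg_le hG hc₁ hσ hβ.le (by positivity)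
    (by positivity) hκγ hκd hη.le hση hV hA hT₀ hAV
  obtain ⟨T, hT, hblow⟩ := hV.exists_eq_top_on_window hG hc₁ hσ hβ.le hβ1.le (by positivity)
    (by positivity) hκγ hκd hη hση hB hT₀ hBV
  refine ⟨2 * T, by positivity, fun t ht x => ?_⟩
  exact hV.eq_top_of_eq_top_on_slab (fun τ hτ z hz => hG.pos hc₁ hτ hz) (by positivity)
    (by positivity) (by linarith : 2 * T < 4 * T) ht measurableSet_ball
    (measure_ball_pos _ _ (by positivity)).ne'
    (fun s hs y hy => hblow s (Ioo_subset_Icc_self hs) y (mem_ball_zero_iff.1 hy).le) x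

/-- Theorem 1.1 / Fujita-type blow-up for `0 < η ≤ α/(βd)`.
If `G` satisfies the lower heat-kernel bound, `V₀ ≥ 0` is not a.e. zero, and `V` is a
mild solution of `∂_t^β V = -(-Δ)^{α/2} V + I_t^{1-β}[V^{1+η}]`, then there exists
`t₀ > 0` such that `V(t,x) = ∞` for all `t > t₀` and all `x`. -/
theorem no_global_solution_subcritical
    (d : ℕ) (hd : 1 ≤ d) (α β η : ℝ)
    (hα : α ∈ Set.Ioo (0 : ℝ) 2) (hβ : β ∈ Set.Ioo (0 : ℝ) 1)
    (hη : 0 < η) (hηc : η ≤ α / (β * d))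
    (G : ℝ → EuclideanSpace ℝ (Fin d) → ℝ)
    (hGmeas : Measurable (Function.uncurry G))
    (hGnonneg : ∀ t x, 0 ≤ G t x)
    (c₁ : ℝ) (hc₁ : 0 < c₁)
    (hGlower : ∀ t : ℝ, 0 < t → ∀ x : EuclideanSpace ℝ (Fin d),
      c₁ * min (t ^ (-(β * d) / α)) (t ^ β / ‖x‖ ^ ((d : ℝ) + α)) ≤ G t x)
    (V₀ : EuclideanSpace ℝ (Fin d) → ℝ)
    (hV₀meas : Measurable V₀) (hV₀nonneg : ∀ x, 0 ≤ V₀ x)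
    (hV₀ne : ¬ (V₀ =ᵐ[volume] 0))
    (V : ℝ → EuclideanSpace ℝ (Fin d) → ℝ≥0∞)
    (hVmeas : Measurable (Function.uncurry V))
    (hmild : ∀ t : ℝ, 0 < t → ∀ x : EuclideanSpace ℝ (Fin d),
      V t x
        = (∫⁻ y, ENNReal.ofReal (G t (x - y)) * ENNReal.ofReal (V₀ y))
          + ∫⁻ s in Set.Ioo (0 : ℝ) t,
              ∫⁻ y, ENNReal.ofReal (G (t - s) (x - y)) * (V s y) ^ (1 + η)) :
    ∃ t₀ : ℝ, 0 < t₀ ∧ ∀ t : ℝ, t₀ < t → ∀ x : EuclideanSpace ℝ (Fin d), V t x = ∞ :=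
  no_global_solution_subcritical_general d hd α β η hα hβ hη hηc G c₁ hc₁ hGlower V₀ hV₀meas
    hV₀nonneg hV₀ne V hmild
end

section
/- Suppose η > α/(βd) and that the scaling kernel G satisfies ‖G(1,·)‖_{L^q(ℝ^d)} < ∞ for every q ∈ [1,∞]. Then there exist a bounded, compactly supported, measurable V₀ : ℝ^d → [0,∞) which is not almost everywhere zero, and a measurable V : (0,∞) × ℝ^d → [0,∞) such that for every t > 0 one has V(t,x) = ∫_{ℝ^d} G(t,x−y)V₀(y) dy + ∫₀^t ∫_{ℝ^d} G(t−s,x−y) V(s,y)^{1+η} dy ds for almost every x ∈ ℝ^d, and moreover ‖V(t,·)‖_{L^∞(ℝ^d)} < ∞ for every t > 0. -/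
/-!
Picard iteration `W₀ = 0`, `Wₙ₊₁ = Φ Wₙ` for the mild formulation `Φ = mildMap μ K (1 + η) U` is
monotone, so by monotone convergence its supremum is a fixed point of `Φ`; it remains to keep the
iterates bounded. With `γ = βd/α`, the scaling relation makes `‖G(t,·)‖₁` independent of `t` and
`‖G(t,·)‖_∞ ≤ t^{-γ} ‖G(1,·)‖_∞`. For small data, `Φ` preserves the set of `W` with
`W(t,·) ≤ A min(1, t^{-γ})` and `‖W(t,·)‖₁ ≤ N`: the Duhamel integral over `s ∈ (0,t)` is split at
`t/2`, using the `L^∞` decay of the kernel on the first half and its mass on the second. Both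
pieces decay like `t^{-γ}` because `γη > 1`, i.e. `η > α/(βd)`: this makes
`∫₀^∞ min(1, s^{-γη}) ds` finite and `t · t^{-γ(1+η)} ≤ t^{-γ}` for `t ≥ 1`.
-/

open MeasureTheory ENNReal Set Function Filter Topology

theorem Measurable.setLIntegral_Ioo_zero {α : Type*} [MeasurableSpace α] {f : α → ℝ → ℝ≥0∞}
    {T : α → ℝ} (hf : Measurable (uncurry f)) (hT : Measurable T) :
    Measurable fun a => ∫⁻ s in Ioo 0 (T a), f a s := by
  simp_rw [← lintegral_indicator measurableSet_Ioo]
  refine Measurable.lintegral_prod_right' (f := {q : α × ℝ | q.2 ∈ Ioo 0 (T q.1)}.indicator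
    (uncurry f)) (hf.indicator ?_)
  exact (measurableSet_lt measurable_const measurable_snd).inter
    (measurableSet_lt measurable_snd (hT.comp measurable_fst))

section Convolution

variable {E : Type*} [MeasurableSpace E] [AddCommGroup E] [MeasurableAdd₂ E] [MeasurableNeg E]
  {μ : Measure E} [μ.IsAddLeftInvariant] {k f : E → ℝ≥0∞}

theorem lintegral_mul_sub_le_of_le [μ.IsNegInvariant] (hk : Measurable k) {c : ℝ≥0∞}
    (hf : ∀ y, f y ≤ c) (x : E) :
    ∫⁻ y, k (x - y) * f y ∂μ ≤ (∫⁻ z, k z ∂μ) * c :=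
  calc ∫⁻ y, k (x - y) * f y ∂μ ≤ ∫⁻ y, k (x - y) * c ∂μ := by gcongr with y; exact hf y
    _ = (∫⁻ z, k z ∂μ) * c := by
      rw [lintegral_mul_const _ (by fun_prop),
        (μ.measurePreserving_sub_left x).lintegral_comp hk]

theorem lintegral_mul_sub_le_of_ae_le [μ.IsNegInvariant] {M : ℝ≥0∞} (hk : ∀ᵐ z ∂μ, k z ≤ M)
    (hf : Measurable f) (x : E) : ∫⁻ y, k (x - y) * f y ∂μ ≤ M * ∫⁻ y, f y ∂μ := by
  rw [← lintegral_const_mul _ hf]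
  refine lintegral_mono_ae ?_
  filter_upwards [(μ.measurePreserving_sub_left x).quasiMeasurePreserving.ae hk] with y hy
  gcongr

theorem lintegral_lintegral_mul_sub [SFinite μ] (hk : Measurable k) (hf : Measurable f) :
    ∫⁻ x, ∫⁻ y, k (x - y) * f y ∂μ ∂μ = (∫⁻ z, k z ∂μ) * ∫⁻ y, f y ∂μ := by
  rw [lintegral_lintegral_swap (by fun_prop), ← lintegral_const_mul _ hf]
  refine lintegral_congr fun y => ?_
  rw [lintegral_mul_const _ (by fun_prop), (measurePreserving_sub_right μ y).lintegral_comp hk]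

end Convolution

section MildMap

variable {E : Type*} [MeasurableSpace E] [AddCommGroup E] (μ : Measure E) (K : ℝ → E → ℝ≥0∞)
  (p : ℝ) (U : E → ℝ≥0∞)

noncomputable def mildMap (W : ℝ → E → ℝ≥0∞) (t : ℝ) (x : E) : ℝ≥0∞ :=
  (∫⁻ y, K t (x - y) * U y ∂μ) + ∫⁻ s in Ioo 0 t, ∫⁻ y, K (t - s) (x - y) * W s y ^ p ∂μ

variable {μ K p U}

theorem monotone_mildMap (hp : 0 ≤ p) : Monotone (mildMap μ K p U) := by
  intro W W' hWW' t x
  unfold mildMap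
  gcongr with s y
  exact hWW' s y

variable [MeasurableAdd₂ E] [MeasurableNeg E] [SFinite μ]

theorem measurable_mildMap (hK : Measurable (uncurry K)) (hU : Measurable U)
    {W : ℝ → E → ℝ≥0∞} (hW : Measurable (uncurry W)) :
    Measurable (uncurry (mildMap μ K p U W)) := by
  refine Measurable.add ?_ ?_
  · exact Measurable.lintegral_prod_right' (f := fun q : (ℝ × E) × E =>
      uncurry K (q.1.1, q.1.2 - q.2) * U q.2) (by fun_prop)
  · refine Measurable.setLIntegral_Ioo_zero (f := fun (q : ℝ × E) s =>
      ∫⁻ y, K (q.1 - s) (q.2 - y) * W s y ^ p ∂μ) ?_ measurable_fst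
    exact Measurable.lintegral_prod_right' (f := fun q : ((ℝ × E) × ℝ) × E =>
      uncurry K (q.1.1.1 - q.1.2, q.1.1.2 - q.2) * uncurry W (q.1.2, q.2) ^ p) (by fun_prop)

theorem mildMap_iSup (hK : Measurable (uncurry K)) (hp : 0 < p) {W : ℕ → ℝ → E → ℝ≥0∞}
    (hW : ∀ n, Measurable (uncurry (W n))) (hmono : Monotone W) :
    mildMap μ K p U (⨆ n, W n) = ⨆ n, mildMap μ K p U (W n) := by
  ext t x
  simp only [mildMap, iSup_apply, ← ENNReal.add_iSup]
  congr 1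
  have hterm : ∀ s y, K (t - s) (x - y) * (⨆ n, W n s y) ^ p
      = ⨆ n, K (t - s) (x - y) * W n s y ^ p := fun s y => by
    rw [← ENNReal.mul_iSup, (ENNReal.monotone_rpow_of_nonneg hp.le).map_iSup_of_continuousAt
      ENNReal.continuous_rpow_const.continuousAt (ENNReal.zero_rpow_of_pos hp)]
  have hmono' : ∀ s y, Monotone fun n => K (t - s) (x - y) * W n s y ^ p :=
    fun s y a b hab => mul_le_mul' le_rfl (ENNReal.rpow_le_rpow (hmono hab s y) hp.le)
  simp_rw [hterm]
  rw [← lintegral_iSup (fun n => ?_) fun a b hab s => lintegral_mono fun y => hmono' s y hab]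
  · refine lintegral_congr fun s => ?_
    exact lintegral_iSup (fun n => by fun_prop) (fun a b hab y => hmono' s y hab)
  · exact Measurable.lintegral_prod_right' (f := fun q : ℝ × E =>
      uncurry K (t - q.1, x - q.2) * uncurry (W n) q ^ p) (by fun_prop)

theorem measurable_iterate_mildMap (hK : Measurable (uncurry K)) (hU : Measurable U) (n : ℕ) :
    Measurable (uncurry ((mildMap μ K p U)^[n] 0)) := by
  induction n with
  | zero => exact measurable_const
  | succ n ih =>
    rw [iterate_succ_apply']
    exact measurable_mildMap hK hU ih

theorem mildMap_iSup_iterate (hK : Measurable (uncurry K)) (hU : Measurable U) (hp : 0 < p) :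
    mildMap μ K p U (⨆ n, (mildMap μ K p U)^[n] 0) = ⨆ n, (mildMap μ K p U)^[n] 0 := by
  have hmono : Monotone fun n => (mildMap μ K p U)^[n] 0 :=
    (monotone_mildMap hp.le).monotone_iterate_of_le_map zero_le
  rw [mildMap_iSup hK hp (measurable_iterate_mildMap hK hU) hmono]
  simp_rw [← iterate_succ_apply' (mildMap μ K p U)]
  exact hmono.iSup_nat_add 1

end MildMap

noncomputable def decayProfile (γ s : ℝ) : ℝ≥0∞ := ENNReal.ofReal (min 1 (s ^ (-γ)))

theorem measurable_decayProfile (γ : ℝ) : Measurable (decayProfile γ) := by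
  unfold decayProfile; fun_prop

theorem decayProfile_le_one (γ s : ℝ) : decayProfile γ s ≤ 1 :=
  ENNReal.ofReal_le_one.mpr (min_le_left _ _)

theorem decayProfile_le_rpow (γ s : ℝ) : decayProfile γ s ≤ ENNReal.ofReal (s ^ (-γ)) :=
  ENNReal.ofReal_le_ofReal (min_le_right _ _)

theorem decayProfile_of_le_one {γ s : ℝ} (hγ : 0 ≤ γ) (hs : 0 < s) (hs1 : s ≤ 1) :
    decayProfile γ s = 1 := by
  rw [decayProfile, min_eq_left (Real.one_le_rpow_of_pos_of_le_one_of_nonpos hs hs1 (by linarith)),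
    ENNReal.ofReal_one]

theorem decayProfile_of_one_le {γ s : ℝ} (hγ : 0 ≤ γ) (hs : 1 ≤ s) :
    decayProfile γ s = ENNReal.ofReal (s ^ (-γ)) := by
  rw [decayProfile, min_eq_right (Real.rpow_le_one_of_one_le_of_nonpos hs (by linarith))]

theorem decayProfile_rpow {γ s p : ℝ} (hs : 0 < s) (hp : 0 ≤ p) :
    decayProfile γ s ^ p = decayProfile (γ * p) s := by
  have hmin : (min 1 (s ^ (-γ))) ^ p = min 1 ((s ^ (-γ)) ^ p) := by
    rcases le_total (s ^ (-γ)) 1 with h | h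
    · rw [min_eq_right h, min_eq_right (Real.rpow_le_one (by positivity) h hp)]
    · rw [min_eq_left h, Real.one_rpow, min_eq_left (Real.one_le_rpow h hp)]
  rw [decayProfile, decayProfile, ENNReal.ofReal_rpow_of_nonneg (by positivity) hp, hmin,
    ← Real.rpow_mul hs.le, neg_mul]

theorem decayProfile_antitoneOn {γ : ℝ} (hγ : 0 ≤ γ) : AntitoneOn (decayProfile γ) (Ioi 0) :=
  fun s hs s' _ hss' => ENNReal.ofReal_le_ofReal
    (min_le_min_left _ (Real.rpow_le_rpow_of_nonpos hs hss' (by linarith)))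

theorem lintegral_decayProfile_ne_top {γ : ℝ} (hγ : 1 < γ) :
    ∫⁻ s in Ioi 0, decayProfile γ s ≠ ∞ := by
  rw [← Ioc_union_Ioi_eq_Ioi zero_le_one, lintegral_union measurableSet_Ioi
    Ioc_disjoint_Ioi_same]
  refine add_ne_top.mpr ⟨ne_top_of_le_ne_top (b := ∫⁻ _ in Ioc (0 : ℝ) 1, 1) ?_ ?_, ?_⟩
  · simp
  · exact lintegral_mono fun s => decayProfile_le_one γ s
  · refine ne_top_of_le_ne_top ((integrableOn_Ioi_rpow_of_lt (a := -γ) (by linarith)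
      one_pos).setLIntegral_lt_top).ne ?_
    exact lintegral_mono fun s => decayProfile_le_rpow γ s

theorem half_rpow_le {t e γ r : ℝ} (ht : 1 ≤ t) (he : e ≤ -γ) (her : -e ≤ r) :
    (t / 2) ^ e ≤ 2 ^ r * t ^ (-γ) := by
  rw [Real.div_rpow (by linarith) zero_le_two, div_eq_mul_inv, ← Real.rpow_neg zero_le_two,
    mul_comm]
  gcongr
  exact one_le_two

theorem setLIntegral_Ioc_half_le {γ r q t : ℝ} (hγ : 0 ≤ γ) (hγr : γ ≤ r) (ht : 1 ≤ t)
    {g : ℝ → ℝ≥0∞} {b : ℝ≥0∞}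
    (hg : ∀ s ∈ Ioc 0 (t / 2), g s ≤ ENNReal.ofReal ((t - s) ^ (-γ)) * (b * decayProfile q s)) :
    ∫⁻ s in Ioc 0 (t / 2), g s
      ≤ ENNReal.ofReal (2 ^ r * t ^ (-γ)) * (b * ∫⁻ s in Ioi 0, decayProfile q s) :=
  calc ∫⁻ s in Ioc 0 (t / 2), g s
      ≤ ∫⁻ s in Ioc 0 (t / 2), ENNReal.ofReal ((t / 2) ^ (-γ)) * (b * decayProfile q s) := by
        refine setLIntegral_mono' measurableSet_Ioc fun s hs => (hg s hs).trans ?_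
        exact mul_le_mul' (ENNReal.ofReal_le_ofReal (Real.rpow_le_rpow_of_nonpos (by linarith)
          (by linarith [hs.2]) (by linarith))) le_rfl
    _ ≤ ENNReal.ofReal ((t / 2) ^ (-γ)) * (b * ∫⁻ s in Ioi 0, decayProfile q s) := by
        rw [lintegral_const_mul' _ _ ofReal_ne_top,
          lintegral_const_mul _ (measurable_decayProfile _)]
        gcongr
        exact Ioc_subset_Ioi_self
    _ ≤ _ := by
        gcongr
        exact half_rpow_le ht le_rfl (by linarith)

theorem setLIntegral_Ioo_half_le {γ r t : ℝ} (hγ : 0 ≤ γ) (hγr : γ + 1 ≤ r) (ht : 1 ≤ t)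
    {g : ℝ → ℝ≥0∞} {a : ℝ≥0∞} (hg : ∀ s ∈ Ioo (t / 2) t, g s ≤ a * decayProfile r s) :
    ∫⁻ s in Ioo (t / 2) t, g s ≤ ENNReal.ofReal (2 ^ r * t ^ (-γ)) * a := by
  have hhalf : 0 < t / 2 := by positivity
  calc ∫⁻ s in Ioo (t / 2) t, g s
      ≤ ∫⁻ _ in Ioo (t / 2) t, a * ENNReal.ofReal ((t / 2) ^ (-r)) := by
        refine setLIntegral_mono' measurableSet_Ioo fun s hs => (hg s hs).trans ?_
        gcongr
        exact (decayProfile_antitoneOn (by linarith) hhalf (hhalf.trans hs.1) hs.1.le).trans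
          (decayProfile_le_rpow _ _)
    _ = ENNReal.ofReal ((t / 2) ^ (-r + 1)) * a := by
        rw [setLIntegral_const, Real.volume_Ioo, _root_.sub_half, Real.rpow_add_one hhalf.ne',
          ENNReal.ofReal_mul (by positivity)]
        ring
    _ ≤ _ := by
        gcongr
        exact half_rpow_le ht (by linarith) (by linarith)

theorem setLIntegral_Ioo_le_mul_decayProfile {γ η t : ℝ} (hγ : 0 < γ) (hγη : 1 ≤ γ * η)
    (ht : 0 < t) {g : ℝ → ℝ≥0∞} {a b : ℝ≥0∞}
    (hnear : ∀ s ∈ Ioo 0 t, g s ≤ a * decayProfile (γ * (1 + η)) s)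
    (hfar : ∀ s ∈ Ioo 0 t, g s ≤ ENNReal.ofReal ((t - s) ^ (-γ)) * (b * decayProfile (γ * η) s)) :
    ∫⁻ s in Ioo 0 t, g s ≤ ENNReal.ofReal (2 ^ (γ * (1 + η)))
      * (a + b * ∫⁻ s in Ioi 0, decayProfile (γ * η) s) * decayProfile γ t := by
  set c := ENNReal.ofReal (2 ^ (γ * (1 + η)))
  set J := ∫⁻ s in Ioi 0, decayProfile (γ * η) s
  rcases le_or_gt t 1 with ht1 | ht1
  · have hc : 1 ≤ c := ENNReal.one_le_ofReal.mpr (Real.one_le_rpow one_le_two (by nlinarith))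
    calc ∫⁻ s in Ioo 0 t, g s ≤ ∫⁻ _ in Ioo 0 t, a :=
          setLIntegral_mono' measurableSet_Ioo fun s hs =>
            (hnear s hs).trans (mul_le_of_le_one_right' (decayProfile_le_one _ _))
      _ = a * ENNReal.ofReal t := by rw [setLIntegral_const, Real.volume_Ioo, sub_zero]
      _ ≤ a := mul_le_of_le_one_right' (ENNReal.ofReal_le_one.mpr ht1)
      _ ≤ c * (a + b * J) * decayProfile γ t := by
          rw [decayProfile_of_le_one hγ.le ht ht1, mul_one]
          exact le_self_add.trans (le_mul_of_one_le_left' hc)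
  have hhalf : 0 < t / 2 := by positivity
  calc ∫⁻ s in Ioo 0 t, g s
      ≤ (∫⁻ s in Ioc 0 (t / 2), g s) + ∫⁻ s in Ioo (t / 2) t, g s := by
        rw [← Ioc_union_Ioo_eq_Ioo hhalf.le (by linarith)]
        exact lintegral_union_le _ _ _
    _ ≤ ENNReal.ofReal (2 ^ (γ * (1 + η)) * t ^ (-γ)) * (b * J)
        + ENNReal.ofReal (2 ^ (γ * (1 + η)) * t ^ (-γ)) * a := by
        gcongr
        · exact setLIntegral_Ioc_half_le hγ.le (by nlinarith) ht1.le fun s hs =>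
            hfar s ⟨hs.1, by linarith [hs.2]⟩
        · exact setLIntegral_Ioo_half_le hγ.le (by linarith) ht1.le fun s hs =>
            hnear s ⟨hhalf.trans hs.1, hs.2⟩
    _ = c * (a + b * J) * decayProfile γ t := by
        rw [decayProfile_of_one_le hγ.le ht1.le, ENNReal.ofReal_mul (by positivity)]
        ring

theorem ENNReal.exists_pos_mul_rpow_le_one {κ : ℝ≥0∞} (hκ : κ ≠ ∞) {η : ℝ} (hη : 0 < η) :
    ∃ A : ℝ≥0∞, 0 < A ∧ A ≠ ∞ ∧ κ * A ^ η ≤ 1 := by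
  refine ⟨min 1 (κ⁻¹ ^ η⁻¹), lt_min one_pos (ENNReal.rpow_pos_of_nonneg
    (ENNReal.inv_pos.mpr hκ) (inv_nonneg.mpr hη.le)),
    ((min_le_left _ _).trans_lt one_lt_top).ne, ?_⟩
  calc κ * (min 1 (κ⁻¹ ^ η⁻¹)) ^ η ≤ κ * (κ⁻¹ ^ η⁻¹) ^ η := by gcongr; exact min_le_right _ _
    _ ≤ 1 := by rw [ENNReal.rpow_inv_rpow hη.ne']; exact ENNReal.mul_inv_le_one κ

theorem exists_smallness_constants {m M c J : ℝ≥0∞} (hm : m ≠ ∞) (hM : M ≠ ∞) (hc : c ≠ ∞)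
    (hJ : J ≠ ∞) {η : ℝ} (hη : 0 < η) :
    ∃ A δ : ℝ≥0∞, A ≠ ∞ ∧ 0 < δ ∧ ∀ ε ν : ℝ≥0∞, ε ≤ δ → ν ≤ δ →
      m * ε + M * ν + c * (m * A ^ (1 + η) + M * A ^ η * (2 * m * ν) * J) ≤ A ∧
      m * ν + m * A ^ η * (2 * m * ν) * J ≤ 2 * m * ν := by
  obtain ⟨A, hA0, hA, hκA⟩ := ENNReal.exists_pos_mul_rpow_le_one (κ := 2 * m * (c + J))
    (by finiteness) hη
  have hcm : 2 * c * m * A ^ η ≤ 1 := hκA.trans' <|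
    calc 2 * c * m * A ^ η = 2 * m * c * A ^ η := by ring
      _ ≤ 2 * m * (c + J) * A ^ η := by gcongr; exact le_self_add
  have hJm : 2 * m * A ^ η * J ≤ 1 := hκA.trans' <|
    calc 2 * m * A ^ η * J = 2 * m * J * A ^ η := by ring
      _ ≤ 2 * m * (c + J) * A ^ η := by gcongr; exact le_add_self
  set C := m + M + c * M * 2 * m * A ^ η * J
  have hC : C ≠ ∞ := by finiteness
  refine ⟨A, A / 2 / C, hA, ENNReal.div_pos (by simp [hA0.ne']) hC, fun ε ν hε hν => ⟨?_, ?_⟩⟩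
  · have hlin : m * ε + M * ν + c * (M * A ^ η * (2 * m * ν) * J) ≤ A / 2 :=
      calc m * ε + M * ν + c * (M * A ^ η * (2 * m * ν) * J)
          ≤ m * (A / 2 / C) + M * (A / 2 / C) + c * (M * A ^ η * (2 * m * (A / 2 / C)) * J) := by
            gcongr
        _ = C * (A / 2 / C) := by ring
        _ ≤ A / 2 := ENNReal.mul_div_le
    have hnonlin : c * (m * A ^ (1 + η)) ≤ A / 2 :=
      calc c * (m * A ^ (1 + η)) = c * m * A ^ η * (2 * (A / 2)) := by
            rw [ENNReal.mul_div_cancel two_ne_zero ofNat_ne_top,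
              ENNReal.rpow_add_of_nonneg _ _ zero_le_one hη.le, ENNReal.rpow_one]
            ring
        _ = 2 * c * m * A ^ η * (A / 2) := by ring
        _ ≤ A / 2 := mul_le_of_le_one_left' hcm
    calc m * ε + M * ν + c * (m * A ^ (1 + η) + M * A ^ η * (2 * m * ν) * J)
        = (m * ε + M * ν + c * (M * A ^ η * (2 * m * ν) * J)) + c * (m * A ^ (1 + η)) := by ring
      _ ≤ A / 2 + A / 2 := add_le_add hlin hnonlin
      _ = A := ENNReal.add_halves A
  · calc m * ν + m * A ^ η * (2 * m * ν) * J = m * ν + (2 * m * A ^ η * J) * (m * ν) := by ring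
      _ ≤ m * ν + 1 * (m * ν) := add_le_add le_rfl (mul_le_mul' hJm le_rfl)
      _ = 2 * m * ν := by ring

structure IsDecayKernel {E : Type*} [MeasurableSpace E] (μ : Measure E) (K : ℝ → E → ℝ≥0∞)
    (γ : ℝ) (m M : ℝ≥0∞) : Prop where
  measurable : Measurable (uncurry K)
  lintegral_eq : ∀ t, 0 < t → ∫⁻ z, K t z ∂μ = m
  ae_le : ∀ t, 0 < t → ∀ᵐ z ∂μ, K t z ≤ ENNReal.ofReal (t ^ (-γ)) * M

theorem isDecayKernel_of_scaling {E : Type*} [NormedAddCommGroup E] [NormedSpace ℝ E]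
    [FiniteDimensional ℝ E] [MeasurableSpace E] [BorelSpace E] (μ : Measure E)
    [μ.IsAddHaarMeasure] {K : ℝ → E → ℝ≥0∞} (hK : Measurable (uncurry K)) {a : ℝ}
    (hscal : ∀ t, 0 < t → ∀ z,
      K t z = ENNReal.ofReal (t ^ (-(a * Module.finrank ℝ E))) * K 1 (t ^ (-a) • z)) :
    IsDecayKernel μ K (a * Module.finrank ℝ E) (∫⁻ z, K 1 z ∂μ) (essSup (K 1) μ) where
  measurable := hK
  lintegral_eq t ht := by
    have hc : t ^ (-a) ≠ 0 := (Real.rpow_pos_of_pos ht _).ne'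
    have hjac : ENNReal.ofReal (t ^ (-(a * Module.finrank ℝ E)))
        * ENNReal.ofReal |((t ^ (-a)) ^ Module.finrank ℝ E)⁻¹| = 1 := by
      rw [← Real.rpow_natCast, ← Real.rpow_mul ht.le, ← Real.rpow_neg ht.le,
        abs_of_pos (Real.rpow_pos_of_pos ht _), ← ENNReal.ofReal_mul (by positivity),
        ← Real.rpow_add ht, neg_mul, neg_neg, neg_add_cancel, Real.rpow_zero, ENNReal.ofReal_one]
    rw [lintegral_congr (hscal t ht), lintegral_const_mul' _ _ ofReal_ne_top,
      ← lintegral_map (f := K 1) (hK.comp measurable_prodMk_left) (measurable_const_smul _),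
      Measure.map_addHaar_smul μ hc, lintegral_smul_measure, smul_eq_mul, ← mul_assoc, hjac,
      one_mul]
  ae_le t ht := by
    have hc : t ^ (-a) ≠ 0 := (Real.rpow_pos_of_pos ht _).ne'
    filter_upwards [(Measure.quasiMeasurePreserving_smul μ hc).ae (ae_le_essSup (K 1))]
      with z hz
    rw [hscal t ht z]
    gcongr

theorem isDecayKernel_ofReal_of_scaling {E : Type*} [NormedAddCommGroup E] [NormedSpace ℝ E]
    [FiniteDimensional ℝ E] [MeasurableSpace E] [BorelSpace E] (μ : Measure E)
    [μ.IsAddHaarMeasure] {G : ℝ → E → ℝ} (hG : Measurable (uncurry G))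
    (hG0 : ∀ t x, 0 ≤ G t x) {a : ℝ}
    (hscal : ∀ t, 0 < t → ∀ x, G t x = t ^ (-(a * Module.finrank ℝ E)) * G 1 (t ^ (-a) • x)) :
    IsDecayKernel μ (fun t x => ENNReal.ofReal (G t x)) (a * Module.finrank ℝ E)
      (eLpNorm (G 1) 1 μ) (eLpNorm (G 1) ∞ μ) := by
  have henorm : ∀ x, ‖G 1 x‖ₑ = ENNReal.ofReal (G 1 x) := fun x => Real.enorm_eq_ofReal (hG0 1 x)
  rw [eLpNorm_one_eq_lintegral_enorm, eLpNorm_exponent_top, eLpNormEssSup]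
  simp_rw [henorm]
  refine isDecayKernel_of_scaling μ (by fun_prop) fun t ht x => ?_
  rw [hscal t ht x, ENNReal.ofReal_mul (by positivity)]

theorem lintegral_rpow_one_add_le {α : Type*} [MeasurableSpace α] {μ : Measure α}
    {f : α → ℝ≥0∞} (hf : Measurable f) {c : ℝ≥0∞} (hfc : ∀ x, f x ≤ c) {η : ℝ} (hη : 0 ≤ η) :
    ∫⁻ x, f x ^ (1 + η) ∂μ ≤ c ^ η * ∫⁻ x, f x ∂μ := by
  rw [← lintegral_const_mul _ hf]
  refine lintegral_mono fun x => ?_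
  rw [ENNReal.rpow_add_of_nonneg _ _ zero_le_one hη, ENNReal.rpow_one, mul_comm]
  gcongr
  exact hfc x

theorem le_mul_decayProfile {γ t : ℝ} (hγ : 0 ≤ γ) (ht : 0 < t) {x p q : ℝ≥0∞} (hp : x ≤ p)
    (hq : x ≤ ENNReal.ofReal (t ^ (-γ)) * q) : x ≤ (p + q) * decayProfile γ t := by
  rcases le_total t 1 with ht1 | ht1
  · rw [decayProfile_of_le_one hγ ht ht1, mul_one]
    exact hp.trans le_self_add
  · rw [decayProfile_of_one_le hγ ht1, mul_comm]
    exact hq.trans (by gcongr; exact le_add_self)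

def DecayBound {E : Type*} [MeasurableSpace E] (μ : Measure E) (γ : ℝ) (A N : ℝ≥0∞)
    (W : ℝ → E → ℝ≥0∞) : Prop :=
  ∀ t, 0 < t → (∀ x, W t x ≤ A * decayProfile γ t) ∧ ∫⁻ x, W t x ∂μ ≤ N

namespace IsDecayKernel

variable {E : Type*} [MeasurableSpace E] [AddCommGroup E] [MeasurableAdd₂ E] [MeasurableNeg E]
  {μ : Measure E} [μ.IsAddLeftInvariant] {K : ℝ → E → ℝ≥0∞} {γ η : ℝ} {m M : ℝ≥0∞}

theorem lintegral_mildMap_le [SFinite μ] (hK : IsDecayKernel μ K γ m M) {U : E → ℝ≥0∞}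
    (hU : Measurable U) (hη : 0 ≤ η) {W : ℝ → E → ℝ≥0∞} (hW : Measurable (uncurry W))
    {A N : ℝ≥0∞} (hWb : DecayBound μ γ A N W) {t : ℝ} (ht : 0 < t) :
    ∫⁻ x, mildMap μ K (1 + η) U W t x ∂μ
      ≤ m * ∫⁻ y, U y ∂μ + m * A ^ η * N * ∫⁻ s in Ioi 0, decayProfile (γ * η) s := by
  have hKmeas : Measurable (uncurry K) := hK.measurable
  have hKm : ∀ s, Measurable (K s) := fun s => hKmeas.comp measurable_prodMk_left
  have hF : Measurable fun q : E × ℝ => ∫⁻ y, K (t - q.2) (q.1 - y) * W q.2 y ^ (1 + η) ∂μ :=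
    Measurable.lintegral_prod_right' (f := fun r : (E × ℝ) × E =>
      uncurry K (t - r.1.2, r.1.1 - r.2) * uncurry W (r.1.2, r.2) ^ (1 + η))
      (by fun_prop)
  have hnonlin : ∀ s ∈ Ioo 0 t, ∫⁻ x, ∫⁻ y, K (t - s) (x - y) * W s y ^ (1 + η) ∂μ ∂μ
      ≤ m * A ^ η * N * decayProfile (γ * η) s := fun s hs => by
    rw [lintegral_lintegral_mul_sub (hKm _) (by fun_prop), hK.lintegral_eq _ (sub_pos.mpr hs.2)]
    calc m * ∫⁻ y, W s y ^ (1 + η) ∂μ ≤ m * ((A * decayProfile γ s) ^ η * N) := by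
          gcongr
          exact (lintegral_rpow_one_add_le (by fun_prop) (hWb s hs.1).1 hη).trans
            (by gcongr; exact (hWb s hs.1).2)
      _ = m * A ^ η * N * decayProfile (γ * η) s := by
          rw [ENNReal.mul_rpow_of_nonneg _ _ hη, decayProfile_rpow hs.1 hη]
          ring
  unfold mildMap
  rw [lintegral_add_left (Measurable.lintegral_prod_right' (f := fun r : E × E =>
      K t (r.1 - r.2) * U r.2) (by fun_prop)), lintegral_lintegral_mul_sub (hKm t) hU,
    hK.lintegral_eq t ht, lintegral_lintegral_swap hF.aemeasurable]
  gcongr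
  calc ∫⁻ s in Ioo 0 t, ∫⁻ x, ∫⁻ y, K (t - s) (x - y) * W s y ^ (1 + η) ∂μ ∂μ
      ≤ ∫⁻ s in Ioo 0 t, m * A ^ η * N * decayProfile (γ * η) s :=
        setLIntegral_mono' measurableSet_Ioo hnonlin
    _ ≤ m * A ^ η * N * ∫⁻ s in Ioi 0, decayProfile (γ * η) s := by
        rw [lintegral_const_mul _ (measurable_decayProfile _)]
        gcongr
        exact Ioo_subset_Ioi_self

variable [μ.IsNegInvariant]

theorem lintegral_mul_rpow_le_mass (hK : IsDecayKernel μ K γ m M) {τ s : ℝ} (hτ : 0 < τ)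
    (hs : 0 < s) (hη : 0 ≤ η) {w : E → ℝ≥0∞} {A : ℝ≥0∞} (hw : ∀ y, w y ≤ A * decayProfile γ s)
    (x : E) :
    ∫⁻ y, K τ (x - y) * w y ^ (1 + η) ∂μ ≤ m * A ^ (1 + η) * decayProfile (γ * (1 + η)) s := by
  refine (lintegral_mul_sub_le_of_le (k := K τ) (hK.measurable.comp measurable_prodMk_left)
    (c := (A * decayProfile γ s) ^ (1 + η)) (fun y => by gcongr; exact hw y) x).trans_eq ?_
  rw [hK.lintegral_eq τ hτ, ENNReal.mul_rpow_of_nonneg _ _ (by linarith),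
    decayProfile_rpow hs (by linarith), mul_assoc]

theorem lintegral_mul_rpow_le_decay (hK : IsDecayKernel μ K γ m M) {τ s : ℝ} (hτ : 0 < τ)
    (hs : 0 < s) (hη : 0 ≤ η) {w : E → ℝ≥0∞} (hwm : Measurable w) {A N : ℝ≥0∞}
    (hw : ∀ y, w y ≤ A * decayProfile γ s) (hwN : ∫⁻ y, w y ∂μ ≤ N) (x : E) :
    ∫⁻ y, K τ (x - y) * w y ^ (1 + η) ∂μ
      ≤ ENNReal.ofReal (τ ^ (-γ)) * (M * A ^ η * N * decayProfile (γ * η) s) :=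
  calc ∫⁻ y, K τ (x - y) * w y ^ (1 + η) ∂μ
      ≤ ENNReal.ofReal (τ ^ (-γ)) * M * ∫⁻ y, w y ^ (1 + η) ∂μ :=
        lintegral_mul_sub_le_of_ae_le (hK.ae_le τ hτ) (by fun_prop) x
    _ ≤ ENNReal.ofReal (τ ^ (-γ)) * M * ((A * decayProfile γ s) ^ η * N) := by
        gcongr
        exact (lintegral_rpow_one_add_le hwm hw hη).trans (by gcongr)
    _ = ENNReal.ofReal (τ ^ (-γ)) * (M * A ^ η * N * decayProfile (γ * η) s) := by
        rw [ENNReal.mul_rpow_of_nonneg _ _ hη, decayProfile_rpow hs hη]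
        ring

theorem lintegral_mul_le (hK : IsDecayKernel μ K γ m M) (hγ : 0 ≤ γ) {U : E → ℝ≥0∞}
    (hU : Measurable U) {ε : ℝ≥0∞} (hUε : ∀ y, U y ≤ ε) {t : ℝ} (ht : 0 < t) (x : E) :
    ∫⁻ y, K t (x - y) * U y ∂μ ≤ (m * ε + M * ∫⁻ y, U y ∂μ) * decayProfile γ t := by
  refine le_mul_decayProfile hγ ht ?_ ?_
  · rw [← hK.lintegral_eq t ht]
    exact lintegral_mul_sub_le_of_le (hK.measurable.comp measurable_prodMk_left) hUε x
  · rw [← mul_assoc]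
    exact lintegral_mul_sub_le_of_ae_le (hK.ae_le t ht) hU x

theorem setLIntegral_lintegral_mul_rpow_le [SFinite μ] (hK : IsDecayKernel μ K γ m M)
    (hγ : 0 < γ) (hγη : 1 ≤ γ * η) {W : ℝ → E → ℝ≥0∞} (hW : Measurable (uncurry W))
    {A N : ℝ≥0∞} (hWb : DecayBound μ γ A N W) {t : ℝ} (ht : 0 < t) (x : E) :
    ∫⁻ s in Ioo 0 t, ∫⁻ y, K (t - s) (x - y) * W s y ^ (1 + η) ∂μ
      ≤ ENNReal.ofReal (2 ^ (γ * (1 + η)))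
        * (m * A ^ (1 + η) + M * A ^ η * N * ∫⁻ s in Ioi 0, decayProfile (γ * η) s)
        * decayProfile γ t := by
  have hη : 0 ≤ η := (pos_of_mul_pos_right (by linarith) hγ.le).le
  refine setLIntegral_Ioo_le_mul_decayProfile hγ hγη ht (fun s hs => ?_) (fun s hs => ?_)
  · exact hK.lintegral_mul_rpow_le_mass (sub_pos.mpr hs.2) hs.1 hη (hWb s hs.1).1 x
  · exact (hK.lintegral_mul_rpow_le_decay (sub_pos.mpr hs.2) hs.1 hη
      (hW.comp measurable_prodMk_left) (hWb s hs.1).1 (hWb s hs.1).2 x).trans_eq (by ring)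

theorem mildMap_decayBound [SFinite μ] (hK : IsDecayKernel μ K γ m M) (hγ : 0 < γ)
    (hγη : 1 ≤ γ * η) {U : E → ℝ≥0∞} (hU : Measurable U) {ε : ℝ≥0∞} (hUε : ∀ y, U y ≤ ε)
    {W : ℝ → E → ℝ≥0∞} (hW : Measurable (uncurry W)) {A N : ℝ≥0∞}
    (hWb : DecayBound μ γ A N W)
    (hA : m * ε + M * ∫⁻ y, U y ∂μ + ENNReal.ofReal (2 ^ (γ * (1 + η)))
      * (m * A ^ (1 + η) + M * A ^ η * N * ∫⁻ s in Ioi 0, decayProfile (γ * η) s) ≤ A)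
    (hN : m * ∫⁻ y, U y ∂μ + m * A ^ η * N * ∫⁻ s in Ioi 0, decayProfile (γ * η) s ≤ N) :
    DecayBound μ γ A N (mildMap μ K (1 + η) U W) := by
  have hη : 0 ≤ η := (pos_of_mul_pos_right (by linarith) hγ.le).le
  refine fun t ht => ⟨fun x => ?_, (hK.lintegral_mildMap_le hU hη hW hWb ht).trans hN⟩
  calc mildMap μ K (1 + η) U W t x
      ≤ (m * ε + M * ∫⁻ y, U y ∂μ) * decayProfile γ t + ENNReal.ofReal (2 ^ (γ * (1 + η)))
        * (m * A ^ (1 + η) + M * A ^ η * N * ∫⁻ s in Ioi 0, decayProfile (γ * η) s)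
        * decayProfile γ t :=
        add_le_add (hK.lintegral_mul_le hγ.le hU hUε ht x)
          (hK.setLIntegral_lintegral_mul_rpow_le hγ hγη hW hWb ht x)
    _ ≤ A * decayProfile γ t := by rw [← add_mul]; gcongr

theorem exists_mildMap_fixedPoint [SFinite μ] (hK : IsDecayKernel μ K γ m M) (hm : m ≠ ∞)
    (hM : M ≠ ∞) (hγ : 0 < γ) (hγη : 1 < γ * η) :
    ∃ δ > 0, ∀ U : E → ℝ≥0∞, Measurable U → (∀ y, U y ≤ δ) → ∫⁻ y, U y ∂μ ≤ δ →
      ∃ W : ℝ → E → ℝ≥0∞, Measurable (uncurry W) ∧ mildMap μ K (1 + η) U W = W ∧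
        ∃ C ≠ ∞, ∀ t, 0 < t → ∀ x, W t x ≤ C := by
  have hη : 0 < η := pos_of_mul_pos_right (by linarith) hγ.le
  obtain ⟨A, δ, hA, hδ, hsmall⟩ := exists_smallness_constants hm hM ofReal_ne_top
    (lintegral_decayProfile_ne_top hγη) hη
  refine ⟨δ, hδ, fun U hU hUδ hνδ => ?_⟩
  obtain ⟨hAε, hN⟩ := hsmall δ _ le_rfl hνδ
  have hbound : ∀ n, DecayBound μ γ A (2 * m * ∫⁻ y, U y ∂μ) ((mildMap μ K (1 + η) U)^[n] 0) := by
    intro n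
    induction n with
    | zero => exact fun t _ => ⟨fun x => zero_le, by simp⟩
    | succ n ih =>
      rw [iterate_succ_apply']
      exact hK.mildMap_decayBound hγ hγη.le hU hUδ
        (measurable_iterate_mildMap hK.measurable hU n) ih hAε hN
  refine ⟨⨆ n, (mildMap μ K (1 + η) U)^[n] 0, ?_, mildMap_iSup_iterate hK.measurable hU
    (by linarith), A, hA, fun t ht x => ?_⟩
  · simpa only [uncurry_def, iSup_apply] using
      Measurable.iSup (measurable_iterate_mildMap (p := 1 + η) hK.measurable hU)
  · simp only [iSup_apply]
    exact iSup_le fun n => ((hbound n t ht).1 x).trans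
      (mul_le_of_le_one_right' (decayProfile_le_one γ t))

theorem exists_real_mildSolution [SFinite μ]
    (hK : IsDecayKernel μ K γ m M) (hm : m ≠ ∞) (hM : M ≠ ∞) (hγ : 0 < γ) (hγη : 1 < γ * η) :
    ∃ δ > 0, ∀ V₀ : E → ℝ, Measurable V₀ → (∀ y, ENNReal.ofReal (V₀ y) ≤ δ) →
      ∫⁻ y, ENNReal.ofReal (V₀ y) ∂μ ≤ δ →
      ∃ V : ℝ → E → ℝ, Measurable (uncurry V) ∧ (∀ t x, 0 ≤ V t x) ∧
        (∀ t, 0 < t → ∀ x, ENNReal.ofReal (V t x) = mildMap μ K (1 + η)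
          (fun y => ENNReal.ofReal (V₀ y)) (fun s y => ENNReal.ofReal (V s y)) t x) ∧
        ∀ t, 0 < t → eLpNorm (V t) ∞ μ ≠ ∞ := by
  obtain ⟨δ, hδ, hsol⟩ := hK.exists_mildMap_fixedPoint hm hM hγ hγη
  refine ⟨δ, hδ, fun V₀ hV₀ hV₀δ hνδ => ?_⟩
  obtain ⟨W, hW, hfix, C, hC, hWC⟩ := hsol _ (by fun_prop) hV₀δ hνδ
  have hWV : ∀ t, 0 < t → ∀ x, ENNReal.ofReal (W t x).toReal = W t x :=
    fun t ht x => ofReal_toReal (ne_top_of_le_ne_top hC (hWC t ht x))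
  refine ⟨fun t x => (W t x).toReal, by fun_prop, fun t x => toReal_nonneg, fun t ht x => ?_,
    fun t ht => ?_⟩
  · rw [hWV t ht]
    conv_lhs => rw [← hfix]
    unfold mildMap
    congr 1
    exact setLIntegral_congr_fun measurableSet_Ioo fun s hs => by simp_rw [hWV s hs.1]
  · rw [eLpNorm_exponent_top]
    refine ((eLpNormEssSup_le_of_ae_enorm_bound (C := C) (.of_forall fun x => ?_)).trans_lt
      hC.lt_top).ne
    rw [Real.enorm_eq_ofReal toReal_nonneg, hWV t ht]
    exact hWC t ht x

end IsDecayKernel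

theorem exists_small_bump {E : Type*} [NormedAddCommGroup E] [MeasurableSpace E] [BorelSpace E]
    [ProperSpace E] (μ : Measure E) [IsFiniteMeasureOnCompacts μ] [μ.IsOpenPosMeasure]
    {δ : ℝ≥0∞} (hδ : 0 < δ) :
    ∃ V₀ : E → ℝ, Measurable V₀ ∧ (∀ x, 0 ≤ V₀ x) ∧ (∃ B : ℝ, ∀ x, V₀ x ≤ B) ∧
      HasCompactSupport V₀ ∧ ¬ (V₀ =ᵐ[μ] 0) ∧ (∀ y, ENNReal.ofReal (V₀ y) ≤ δ) ∧
      ∫⁻ y, ENNReal.ofReal (V₀ y) ∂μ ≤ δ := by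
  set B := Metric.closedBall (0 : E) 1
  have hB : μ B ≠ ∞ := measure_closedBall_lt_top.ne
  have hsmall : ∀ᶠ ε in 𝓝 (0 : ℝ), ENNReal.ofReal ε < δ ∧ ENNReal.ofReal ε * μ B < δ := by
    have h := ENNReal.tendsto_ofReal (tendsto_id (x := 𝓝 (0 : ℝ)))
    rw [ENNReal.ofReal_zero] at h
    refine (h.eventually (gt_mem_nhds hδ)).and ?_
    exact (ENNReal.Tendsto.mul_const h (Or.inr hB)).eventually (gt_mem_nhds (by simpa using hδ))
  obtain ⟨ε, ⟨hεδ, hενδ⟩, hε⟩ := (hsmall.filter_mono nhdsWithin_le_nhds |>.and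
    self_mem_nhdsWithin).exists (f := 𝓝[>] (0 : ℝ))
  have hV₀ : (fun y => ENNReal.ofReal (B.indicator (fun _ => ε) y))
      = B.indicator fun _ => ENNReal.ofReal ε :=
    (indicator_comp_of_zero (g := ENNReal.ofReal) ENNReal.ofReal_zero).symm
  refine ⟨B.indicator fun _ => ε, measurable_const.indicator measurableSet_closedBall,
    indicator_nonneg fun _ _ => le_of_lt hε, ⟨ε, indicator_le_self' fun _ _ => le_of_lt hε⟩,
    HasCompactSupport.intro (isCompact_closedBall 0 1) fun x hx => indicator_of_notMem hx _,
    fun h => ?_, fun y => ?_, ?_⟩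
  · refine (Metric.measure_closedBall_pos μ (0 : E) one_pos).ne' (measure_mono_null ?_ h)
    intro x hx
    rw [mem_compl_iff, mem_ofPred, indicator_of_mem hx]
    exact hε.ne'
  · rw [congrFun hV₀ y]
    exact (indicator_le_self' (fun _ _ => zero_le) y).trans hεδ.le
  · rw [hV₀, lintegral_indicator measurableSet_closedBall, setLIntegral_const]
    exact hενδ.le

/-- Theorem 1.2. If `η > α/(βd)` and the scaling kernel `G` satisfies
`‖G(1,·)‖_{L^q} < ∞` for every `q ∈ [1,∞]`, then there is a bounded, compactly
supported, non-trivial nonnegative initial datum `V₀` for which a global mild solution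
`V` exists, with `‖V(t,·)‖_{L^∞} < ∞` for every `t > 0`. -/
theorem global_solution_supercritical
    (d : ℕ) (hd : 1 ≤ d) (α β η : ℝ)
    (hα : α ∈ Set.Ioo (0 : ℝ) 2) (hβ : β ∈ Set.Ioo (0 : ℝ) 1)
    (hη : α / (β * d) < η)
    (G : ℝ → EuclideanSpace ℝ (Fin d) → ℝ)
    (hGmeas : Measurable (Function.uncurry G))
    (hGnonneg : ∀ t x, 0 ≤ G t x)
    (hGscal : ∀ s t : ℝ, 0 < s → 0 < t → ∀ x : EuclideanSpace ℝ (Fin d),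
      G (s * t) x = s ^ (-(β * d) / α) * G t ((s ^ (-(β / α))) • x))
    (hGLq : ∀ q : ℝ≥0∞, 1 ≤ q → eLpNorm (G 1) q volume ≠ ∞) :
    ∃ V₀ : EuclideanSpace ℝ (Fin d) → ℝ,
      Measurable V₀ ∧ (∀ x, 0 ≤ V₀ x) ∧ (∃ B : ℝ, ∀ x, V₀ x ≤ B) ∧
      HasCompactSupport V₀ ∧ ¬ (V₀ =ᵐ[volume] 0) ∧
      ∃ V : ℝ → EuclideanSpace ℝ (Fin d) → ℝ,
        Measurable (Function.uncurry V) ∧ (∀ t x, 0 ≤ V t x) ∧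
        (∀ t : ℝ, 0 < t → ∀ᵐ x : EuclideanSpace ℝ (Fin d) ∂volume,
          ENNReal.ofReal (V t x)
            = (∫⁻ y, ENNReal.ofReal (G t (x - y)) * ENNReal.ofReal (V₀ y))
              + ∫⁻ s in Set.Ioo (0 : ℝ) t,
                  ∫⁻ y, ENNReal.ofReal (G (t - s) (x - y))
                    * ENNReal.ofReal (V s y) ^ (1 + η)) ∧
        (∀ t : ℝ, 0 < t → eLpNorm (V t) ∞ volume ≠ ∞) := by
  obtain ⟨hα0, -⟩ := hα
  obtain ⟨hβ0, -⟩ := hβ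
  have hd0 : (0 : ℝ) < d := by exact_mod_cast hd
  have hγ : 0 < β / α * d := by positivity
  have hγη : 1 < β / α * d * η := by
    calc (1 : ℝ) = β / α * d * (α / (β * d)) := by field_simp
      _ < β / α * d * η := by gcongr
  have hK := isDecayKernel_ofReal_of_scaling volume hGmeas hGnonneg (a := β / α) fun t ht x => by
    rw [finrank_euclideanSpace_fin, show -(β / α * d) = -(β * d) / α by ring,
      ← hGscal t 1 ht one_pos x, mul_one]
  rw [finrank_euclideanSpace_fin] at hK
  obtain ⟨δ, hδ, hsol⟩ := hK.exists_real_mildSolution (hGLq 1 le_rfl) (hGLq ∞ le_top) hγ hγη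
  obtain ⟨V₀, hV₀, hV₀0, hV₀B, hV₀c, hV₀ne, hV₀δ, hV₀ν⟩ :=
    exists_small_bump (volume : Measure (EuclideanSpace ℝ (Fin d))) hδ
  obtain ⟨V, hV, hV0, hVeq, hVinf⟩ := hsol V₀ hV₀ hV₀δ hV₀ν
  exact ⟨V₀, hV₀, hV₀0, hV₀B, hV₀c, hV₀ne, V, hV, hV0, fun t ht => .of_forall (hVeq t ht), hVinf⟩
end

section
/- Assume the semigroup-type inequality (i), the on-diagonal bound (ii), and η > α/(βd), γ > 0. Then there exist δ₀ > 0 and C > 0 such that for every measurable V₀ : ℝ^d → [0,∞) with V₀(x) ≤ δ₀ · G(γ,x) for all x ∈ ℝ^d, there exists a measurable V : (0,∞) × ℝ^d → [0,∞) satisfying V(t,x) = ∫_{ℝ^d} G(t,x−y)V₀(y) dy + ∫₀^t ∫_{ℝ^d} G(t−s,x−y) V(s,y)^{1+η} dy ds for all t > 0, x ∈ ℝ^d, and such that V(t,x) ≤ C · G(t+γ, x) for all t > 0 and x ∈ ℝ^d. -/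
/-!
Everything is done in `ℝ≥0∞` with `g t x = G(t,x)`, where all integrals make sense and the
Duhamel map `Φ W (t,x) = ∫ g(t,x-y) V₀(y) dy + ∫₀ᵗ ∫ g(t-s,x-y) W(s,y)^(1+η) dy ds` is monotone
and, by monotone convergence, commutes with suprema of increasing measurable sequences. Hence
the Picard iterates `Φⁿ 0` increase to a measurable fixed point, and any bound preserved by `Φ`
passes to it.

The bound `W(t,x) ≤ C g(t+γ,x)` is preserved. The semigroup inequality turns the linear term
into `δ₀ C₀ g(t+γ,x)`. In the nonlinear term write `W^(1+η) ≤ C^(1+η) g(s+γ)^η g(s+γ)`; the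
on-diagonal bound gives `g(s+γ)^η ≤ c₂^η (s+γ)^(-βdη/α)`, and the semigroup inequality in `y`
leaves `C^(1+η) C₀ c₂^η g(t+γ,x) ∫₀^∞ (s+γ)^(-βdη/α) ds`, finite exactly because
`η > α/(βd)`. The bound closes once `C` is small and `δ₀ ≪ C`.
-/

open MeasureTheory ENNReal Set Function

theorem setLIntegral_Ioi_rpow_add {γ a : ℝ} (hγ : 0 < γ) (ha : a < -1) :
    ∫⁻ s in Ioi 0, ENNReal.ofReal ((s + γ) ^ a) = ENNReal.ofReal (-γ ^ (a + 1) / (a + 1)) := by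
  have hshift : (· + γ) ⁻¹' Ioi γ = Ioi 0 := by rw [preimage_add_const_Ioi, sub_self]
  rw [← hshift, (measurePreserving_add_right volume γ).setLIntegral_comp_preimage_emb
      (measurableEmbedding_addRight γ) (fun u => ENNReal.ofReal (u ^ a)),
    ← ofReal_integral_eq_lintegral_ofReal (integrableOn_Ioi_rpow_of_lt ha hγ)
      (ae_restrict_of_forall_mem measurableSet_Ioi fun u hu =>
        Real.rpow_nonneg (hγ.trans hu).le _),
    integral_Ioi_rpow_of_lt ha hγ]

theorem exists_mul_add_rpow_mul_le {K B η : ℝ} (hK : 0 ≤ K) (hB : 0 ≤ B) (hη : 0 < η) :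
    ∃ δ > 0, ∃ C > 0, δ * K + C ^ (1 + η) * B ≤ C := by
  set C := (2 * B + 1)⁻¹ ^ η⁻¹
  have hC : 0 < C := by positivity
  have hCη : C ^ η * B ≤ 1 / 2 := by
    rw [← Real.rpow_mul (by positivity), inv_mul_cancel₀ hη.ne', Real.rpow_one,
      inv_mul_le_iff₀ (by positivity)]
    linarith
  have hδK : C / (2 * K + 1) * K ≤ C / 2 := by
    rw [div_mul_eq_mul_div, div_le_div_iff₀ (by positivity) two_pos]
    nlinarith
  refine ⟨C / (2 * K + 1), by positivity, C, hC, ?_⟩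
  rw [Real.rpow_add hC, Real.rpow_one, mul_assoc]
  nlinarith

theorem ENNReal.exists_ofReal_mul_add_rpow_mul_le {K B : ℝ≥0∞} (hK : K ≠ ∞) (hB : B ≠ ∞) {η : ℝ}
    (hη : 0 < η) :
    ∃ δ > 0, ∃ C > 0,
      ENNReal.ofReal δ * K + ENNReal.ofReal C ^ (1 + η) * B ≤ ENNReal.ofReal C := by
  obtain ⟨δ, hδ, C, hC, hle⟩ :=
    exists_mul_add_rpow_mul_le (K := K.toReal) (B := B.toReal) toReal_nonneg toReal_nonneg hη
  refine ⟨δ, hδ, C, hC, ?_⟩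
  rw [← ofReal_toReal hK, ← ofReal_toReal hB, ← ofReal_mul hδ.le,
    ofReal_rpow_of_nonneg hC.le (by linarith), ← ofReal_mul (by positivity),
    ← ofReal_add (by positivity) (by positivity)]
  exact ofReal_le_ofReal hle

theorem ENNReal.ofReal_rpow_le_of_le_mul_rpow {a c s e η : ℝ} (hc : 0 ≤ c) (hs : 0 < s)
    (hη : 0 ≤ η) (h : a ≤ c * s ^ e) :
    ENNReal.ofReal a ^ η ≤ ENNReal.ofReal (c ^ η) * ENNReal.ofReal (s ^ (e * η)) :=
  calc ENNReal.ofReal a ^ η ≤ ENNReal.ofReal (c * s ^ e) ^ η := by gcongr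
    _ = _ := by
      rw [ofReal_rpow_of_nonneg (by positivity) hη, Real.mul_rpow hc (by positivity),
        ← Real.rpow_mul hs.le, ofReal_mul (by positivity)]

theorem measurable_setLIntegral_Ioo_zero {α : Type*} [MeasurableSpace α] {τ : α → ℝ}
    (hτ : Measurable τ) {F : α → ℝ → ℝ≥0∞} (hF : Measurable (uncurry F)) :
    Measurable fun a => ∫⁻ s in Ioo 0 (τ a), F a s := by
  have hS : MeasurableSet {q : α × ℝ | q.2 ∈ Ioo 0 (τ q.1)} :=
    (measurableSet_lt measurable_const measurable_snd).inter
      (measurableSet_lt measurable_snd (hτ.comp measurable_fst))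
  simp_rw [← lintegral_indicator measurableSet_Ioo]
  exact (hF.indicator hS).lintegral_prod_right'

section Duhamel

variable {E : Type*} [MeasurableSpace E] [Sub E]
  (μ : Measure E) (g : ℝ → E → ℝ≥0∞) (p : ℝ) (W₀ : ℝ → E → ℝ≥0∞)

noncomputable def duhamel (W : ℝ → E → ℝ≥0∞) : ℝ → E → ℝ≥0∞ :=
  fun t x => W₀ t x + ∫⁻ s in Ioo 0 t, ∫⁻ y, g (t - s) (x - y) * W s y ^ p ∂μ

variable {μ g p W₀}

theorem duhamel_mono (hp : 0 ≤ p) : Monotone (duhamel μ g p W₀) :=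
  fun _ _ hW _ _ => add_le_add_right (lintegral_mono fun s => lintegral_mono fun y =>
    mul_le_mul_right (rpow_le_rpow (hW s y) hp) _) _

theorem ofReal_toReal_of_duhamel_eq {W : ℝ → E → ℝ≥0∞} (hW : duhamel μ g p W₀ W = W)
    (hfin : ∀ t > 0, ∀ x, W t x ≠ ∞) {t : ℝ} (ht : 0 < t) (x : E) :
    ENNReal.ofReal (W t x).toReal = W₀ t x +
      ∫⁻ s in Ioo 0 t, ∫⁻ y, g (t - s) (x - y) * ENNReal.ofReal (W s y).toReal ^ p ∂μ := by
  rw [ofReal_toReal (hfin t ht x)]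
  conv_lhs => rw [← hW]
  refine congrArg (W₀ t x + ·) (setLIntegral_congr_fun measurableSet_Ioo fun s hs => ?_)
  simp only [ofReal_toReal (hfin s hs.1 _)]

theorem lintegral_mul_le_of_le_mul {t γ : ℝ} {x : E} {K δ : ℝ≥0∞} (hδ : δ ≠ ∞)
    {f : E → ℝ≥0∞} (hf : ∀ y, f y ≤ δ * g γ y)
    (hsemi : ∫⁻ y, g t (x - y) * g γ y ∂μ ≤ K * g (t + γ) x) :
    ∫⁻ y, g t (x - y) * f y ∂μ ≤ δ * K * g (t + γ) x :=
  calc ∫⁻ y, g t (x - y) * f y ∂μ ≤ ∫⁻ y, δ * (g t (x - y) * g γ y) ∂μ :=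
        lintegral_mono fun y => by rw [mul_left_comm]; gcongr; exact hf y
    _ = δ * ∫⁻ y, g t (x - y) * g γ y ∂μ := lintegral_const_mul' _ _ hδ
    _ ≤ δ * K * g (t + γ) x := by rw [mul_assoc]; gcongr

variable [MeasurableSub₂ E]

theorem duhamel_le_of_semigroup (hg : Measurable (uncurry g)) {η γ : ℝ} (hη : 0 ≤ η)
    (hγ : 0 ≤ γ) {K A C I : ℝ≥0∞} {h : ℝ → ℝ≥0∞} (hh : Measurable h)
    (hsemi : ∀ a b, 0 < a → 0 < b → ∀ x, ∫⁻ y, g a (x - y) * g b y ∂μ ≤ K * g (a + b) x)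
    (hdiag : ∀ s > 0, ∀ y, g (s + γ) y ^ η ≤ h s) (hI : ∀ t, ∫⁻ s in Ioo 0 t, h s ≤ I)
    (hW₀ : ∀ t > 0, ∀ x, W₀ t x ≤ A * g (t + γ) x)
    {W : ℝ → E → ℝ≥0∞} (hW : ∀ s > 0, ∀ y, W s y ≤ C * g (s + γ) y) :
    ∀ t > 0, ∀ x, duhamel μ g (1 + η) W₀ W t x ≤ (A + C ^ (1 + η) * K * I) * g (t + γ) x := by
  intro t ht x
  have hpow : ∀ s > 0, ∀ y, W s y ^ (1 + η) ≤ C ^ (1 + η) * h s * g (s + γ) y := fun s hs y =>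
    calc W s y ^ (1 + η) ≤ (C * g (s + γ) y) ^ (1 + η) := by gcongr; exact hW s hs y
      _ = C ^ (1 + η) * (g (s + γ) y ^ η * g (s + γ) y) := by
        rw [mul_rpow_of_nonneg _ _ (by linarith),
          rpow_add_of_nonneg (x := g (s + γ) y) _ _ zero_le_one hη, rpow_one,
          mul_comm (g (s + γ) y)]
      _ ≤ C ^ (1 + η) * h s * g (s + γ) y := by
        rw [mul_assoc]; gcongr; exact hdiag s hs y
  have hslice : ∀ s ∈ Ioo 0 t, ∫⁻ y, g (t - s) (x - y) * W s y ^ (1 + η) ∂μ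
      ≤ C ^ (1 + η) * K * g (t + γ) x * h s := fun s ⟨hs, hst⟩ =>
    calc ∫⁻ y, g (t - s) (x - y) * W s y ^ (1 + η) ∂μ
        ≤ ∫⁻ y, C ^ (1 + η) * h s * (g (t - s) (x - y) * g (s + γ) y) ∂μ :=
          lintegral_mono fun y => by
            rw [mul_left_comm]; gcongr; exact hpow s hs y
      _ = C ^ (1 + η) * h s * ∫⁻ y, g (t - s) (x - y) * g (s + γ) y ∂μ :=
          lintegral_const_mul _ ((hg.comp (f := fun y => (t - s, x - y)) (by fun_prop)).mul
            (hg.comp (f := fun y => (s + γ, y)) (by fun_prop)))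
      _ ≤ C ^ (1 + η) * h s * (K * g (t + γ) x) := by
          gcongr
          have hsum : t - s + (s + γ) = t + γ := by ring
          simpa only [hsum] using hsemi (t - s) (s + γ) (sub_pos.2 hst) (by linarith) x
      _ = C ^ (1 + η) * K * g (t + γ) x * h s := by ring
  calc duhamel μ g (1 + η) W₀ W t x
      ≤ A * g (t + γ) x + ∫⁻ s in Ioo 0 t, C ^ (1 + η) * K * g (t + γ) x * h s :=
        add_le_add (hW₀ t ht x) (setLIntegral_mono (by fun_prop) hslice)
    _ ≤ A * g (t + γ) x + C ^ (1 + η) * K * g (t + γ) x * I := by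
        rw [lintegral_const_mul _ hh]; gcongr; exact hI t
    _ = (A + C ^ (1 + η) * K * I) * g (t + γ) x := by ring

variable [SFinite μ]

theorem measurable_lintegral_kernel_mul (hg : Measurable (uncurry g)) {f : E → ℝ≥0∞}
    (hf : Measurable f) : Measurable (uncurry fun t x => ∫⁻ y, g t (x - y) * f y ∂μ) :=
  ((hg.comp (f := fun q : (ℝ × E) × E => (q.1.1, q.1.2 - q.2)) (by fun_prop)).mul
    (hf.comp measurable_snd)).lintegral_prod_right'

theorem measurable_duhamel (hg : Measurable (uncurry g)) (hW₀ : Measurable (uncurry W₀))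
    {W : ℝ → E → ℝ≥0∞} (hW : Measurable (uncurry W)) :
    Measurable (uncurry (duhamel μ g p W₀ W)) := by
  refine hW₀.add (measurable_setLIntegral_Ioo_zero measurable_fst ?_)
  refine Measurable.lintegral_prod_right' (f := fun r : ((ℝ × E) × ℝ) × E =>
    g (r.1.1.1 - r.1.2) (r.1.1.2 - r.2) * W r.1.2 r.2 ^ p) ?_
  exact (hg.comp (f := fun r : ((ℝ × E) × ℝ) × E => (r.1.1.1 - r.1.2, r.1.1.2 - r.2))
    (by fun_prop)).mul ((hW.comp (f := fun r : ((ℝ × E) × ℝ) × E => (r.1.2, r.2))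
    (by fun_prop)).pow_const p)

theorem duhamel_iSup (hp : 0 < p) (hg : Measurable (uncurry g)) {W : ℕ → ℝ → E → ℝ≥0∞}
    (hW : ∀ n, Measurable (uncurry (W n))) (hW_mono : Monotone W) :
    duhamel μ g p W₀ (⨆ n, W n) = ⨆ n, duhamel μ g p W₀ (W n) := by
  ext t x
  have hmeas : ∀ n, Measurable (uncurry fun s y => g (t - s) (x - y) * W n s y ^ p) := fun n =>
    (hg.comp (f := fun q : ℝ × E => (t - q.1, x - q.2)) (by fun_prop)).mul
      ((hW n).pow_const p)
  have hmono : ∀ s, Monotone fun n y => g (t - s) (x - y) * W n s y ^ p := fun s _ _ hmn y =>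
    mul_le_mul_right (rpow_le_rpow (hW_mono hmn s y) hp.le) _
  have hpow : ∀ s y, (⨆ n, W n s y) ^ p = ⨆ n, W n s y ^ p := fun s y =>
    (orderIsoRpow p hp).map_iSup _
  simp only [duhamel, iSup_apply, hpow, ENNReal.mul_iSup, ← ENNReal.add_iSup]
  congr 1
  calc ∫⁻ s in Ioo 0 t, ∫⁻ y, ⨆ n, g (t - s) (x - y) * W n s y ^ p ∂μ
      = ∫⁻ s in Ioo 0 t, ⨆ n, ∫⁻ y, g (t - s) (x - y) * W n s y ^ p ∂μ :=
        lintegral_congr fun s =>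
          lintegral_iSup (fun n => (hmeas n).comp measurable_prodMk_left) (hmono s)
    _ = ⨆ n, ∫⁻ s in Ioo 0 t, ∫⁻ y, g (t - s) (x - y) * W n s y ^ p ∂μ :=
        lintegral_iSup (fun n => (hmeas n).lintegral_prod_right')
          fun _ _ hmn s => lintegral_mono (hmono s hmn)

theorem exists_measurable_fixedPoint_duhamel_le (hp : 0 < p) (hg : Measurable (uncurry g))
    (hW₀ : Measurable (uncurry W₀)) {M : ℝ → E → ℝ≥0∞}
    (hM : ∀ W, Measurable (uncurry W) → (∀ t > 0, ∀ x, W t x ≤ M t x) →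
      ∀ t > 0, ∀ x, duhamel μ g p W₀ W t x ≤ M t x) :
    ∃ W, Measurable (uncurry W) ∧ duhamel μ g p W₀ W = W ∧ ∀ t > 0, ∀ x, W t x ≤ M t x := by
  set u : ℕ → ℝ → E → ℝ≥0∞ := fun n => (duhamel μ g p W₀)^[n] ⊥
  have hu_succ : ∀ n, u (n + 1) = duhamel μ g p W₀ (u n) := fun n => iterate_succ_apply' _ n ⊥
  have hu_meas : ∀ n, Measurable (uncurry (u n)) := by
    intro n
    induction n with
    | zero => exact measurable_const
    | succ n ih => rw [hu_succ]; exact measurable_duhamel hg hW₀ ih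
  have hu_mono : Monotone u := (duhamel_mono hp.le).monotone_iterate_of_le_map bot_le
  have hu_le : ∀ n, ∀ t > 0, ∀ x, u n t x ≤ M t x := by
    intro n
    induction n with
    | zero => exact fun _ _ _ => bot_le
    | succ n ih => rw [hu_succ]; exact hM _ (hu_meas n) ih
  refine ⟨⨆ n, u n, ?_, ?_, fun t ht x => ?_⟩
  · have : uncurry (⨆ n, u n) = fun q => ⨆ n, uncurry (u n) q := by
      ext; simp only [uncurry, iSup_apply]
    rw [this]
    exact Measurable.iSup hu_meas
  · rw [duhamel_iSup hp hg hu_meas hu_mono]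
    simp_rw [← hu_succ]
    exact hu_mono.iSup_nat_add 1
  · simp only [iSup_apply]
    exact iSup_le fun n => hu_le n t ht x

theorem exists_global_duhamel_solution (hg : Measurable (uncurry g)) {η γ : ℝ} (hη : 0 < η)
    (hγ : 0 < γ) {K : ℝ≥0∞} (hK : K ≠ ∞) {h : ℝ → ℝ≥0∞} (hh : Measurable h)
    (hh_int : ∫⁻ s in Ioi 0, h s ≠ ∞)
    (hsemi : ∀ a b, 0 < a → 0 < b → ∀ x, ∫⁻ y, g a (x - y) * g b y ∂μ ≤ K * g (a + b) x)
    (hdiag : ∀ s > 0, ∀ y, g (s + γ) y ^ η ≤ h s) :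
    ∃ δ > 0, ∃ C > 0, ∀ f : E → ℝ≥0∞, Measurable f → (∀ y, f y ≤ ENNReal.ofReal δ * g γ y) →
      ∃ W, Measurable (uncurry W) ∧
        duhamel μ g (1 + η) (fun t x => ∫⁻ y, g t (x - y) * f y ∂μ) W = W ∧
        ∀ t > 0, ∀ x, W t x ≤ ENNReal.ofReal C * g (t + γ) x := by
  obtain ⟨δ, hδ, C, hC, hδC⟩ :=
    ENNReal.exists_ofReal_mul_add_rpow_mul_le hK (mul_ne_top hK hh_int) hη
  refine ⟨δ, hδ, C, hC, fun f hf hfg => ?_⟩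
  refine exists_measurable_fixedPoint_duhamel_le (by linarith) hg
    (measurable_lintegral_kernel_mul hg hf) fun W _ hW t ht x => ?_
  calc _ ≤ (ENNReal.ofReal δ * K + ENNReal.ofReal C ^ (1 + η) * K * ∫⁻ s in Ioi 0, h s)
        * g (t + γ) x :=
      duhamel_le_of_semigroup hg hη.le hγ.le hh hsemi hdiag
        (fun _ => lintegral_mono_set Ioo_subset_Ioi_self)
        (fun t ht x => lintegral_mul_le_of_le_mul ofReal_ne_top hfg (hsemi t γ ht hγ x))
        hW t ht x
    _ ≤ _ := by rw [mul_assoc _ K]; gcongr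

end Duhamel

/-- Theorem 1.3. Under the semigroup-type inequality and the
on-diagonal bound, for `η > α/(βd)` and `γ > 0` there are `δ₀, C > 0` such that for
every `V₀` with `0 ≤ V₀ ≤ δ₀ G(γ,·)` there is a global mild solution `V` with
`V(t,x) ≤ C G(t+γ,x)`. -/
theorem global_solution_comparison
    (d : ℕ) (hd : 1 ≤ d) (α β η γ : ℝ)
    (hα : α ∈ Set.Ioo (0 : ℝ) 2) (hβ : β ∈ Set.Ioo (0 : ℝ) 1)
    (hη : α / (β * d) < η) (hγ : 0 < γ)
    (G : ℝ → EuclideanSpace ℝ (Fin d) → ℝ)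
    (hGmeas : Measurable (Function.uncurry G))
    (hGpos : ∀ t : ℝ, 0 < t → ∀ x, 0 < G t x)
    (C₀ : ℝ) (hC₀ : 0 < C₀)
    (hGsemi : ∀ a b : ℝ, 0 < a → 0 < b → ∀ x : EuclideanSpace ℝ (Fin d),
      (∫⁻ y, ENNReal.ofReal (G a (x - y)) * ENNReal.ofReal (G b y))
        ≤ ENNReal.ofReal (C₀ * G (a + b) x))
    (c₂ : ℝ) (hc₂ : 0 < c₂)
    (hGdiag : ∀ t : ℝ, 0 < t → ∀ x : EuclideanSpace ℝ (Fin d),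
      G t x ≤ c₂ * t ^ (-(β * d) / α)) :
    ∃ δ₀ : ℝ, 0 < δ₀ ∧ ∃ C : ℝ, 0 < C ∧
      ∀ V₀ : EuclideanSpace ℝ (Fin d) → ℝ,
        Measurable V₀ → (∀ x, 0 ≤ V₀ x) → (∀ x, V₀ x ≤ δ₀ * G γ x) →
        ∃ V : ℝ → EuclideanSpace ℝ (Fin d) → ℝ,
          Measurable (Function.uncurry V) ∧ (∀ t x, 0 ≤ V t x) ∧
          (∀ t : ℝ, 0 < t → ∀ x : EuclideanSpace ℝ (Fin d),
            ENNReal.ofReal (V t x)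
              = (∫⁻ y, ENNReal.ofReal (G t (x - y)) * ENNReal.ofReal (V₀ y))
                + ∫⁻ s in Set.Ioo (0 : ℝ) t,
                    ∫⁻ y, ENNReal.ofReal (G (t - s) (x - y))
                      * ENNReal.ofReal (V s y) ^ (1 + η)) ∧
          (∀ t : ℝ, 0 < t → ∀ x : EuclideanSpace ℝ (Fin d),
            V t x ≤ C * G (t + γ) x) := by
  obtain ⟨hα0, -⟩ := hα
  obtain ⟨hβ0, -⟩ := hβ
  have hβd : 0 < β * d := mul_pos hβ0 (by exact_mod_cast hd)
  have hη0 : 0 < η := (div_pos hα0 hβd).trans hη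
  have ha : -(β * d) / α * η < -1 := by
    rw [div_lt_iff₀ hβd] at hη
    rw [neg_div, neg_mul, neg_lt_neg_iff, div_mul_eq_mul_div, one_lt_div hα0]
    linarith
  set g : ℝ → EuclideanSpace ℝ (Fin d) → ℝ≥0∞ := fun t x => ENNReal.ofReal (G t x)
  obtain ⟨δ₀, hδ₀, C, hC, hsol⟩ := exists_global_duhamel_solution (μ := volume) (g := g)
    (ENNReal.measurable_ofReal.comp hGmeas) hη0 hγ ofReal_ne_top
    (h := fun s => ENNReal.ofReal (c₂ ^ η) * ENNReal.ofReal ((s + γ) ^ (-(β * d) / α * η)))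
    (by fun_prop)
    (by rw [lintegral_const_mul' _ _ ofReal_ne_top, setLIntegral_Ioi_rpow_add hγ ha]; finiteness)
    (fun a b ha hb x => by rw [← ofReal_mul hC₀.le]; exact hGsemi a b ha hb x)
    (fun s hs y => ENNReal.ofReal_rpow_le_of_le_mul_rpow hc₂.le (by linarith) hη0.le
      (hGdiag _ (by linarith) y))
  refine ⟨δ₀, hδ₀, C, hC, fun V₀ hV₀m _ hV₀le => ?_⟩
  obtain ⟨W, hWm, hWfix, hWle⟩ := hsol (fun y => ENNReal.ofReal (V₀ y)) (by fun_prop)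
    fun y => by rw [← ofReal_mul hδ₀.le]; exact ofReal_le_ofReal (hV₀le y)
  have hWle' : ∀ t > 0, ∀ x, W t x ≤ ENNReal.ofReal (C * G (t + γ) x) := fun t ht x =>
    (hWle t ht x).trans_eq (ofReal_mul hC.le).symm
  refine ⟨fun t x => (W t x).toReal, measurable_toReal.comp hWm, fun _ _ => toReal_nonneg,
    fun t ht x => ofReal_toReal_of_duhamel_eq hWfix (fun t ht x => ne_top_of_le_ne_top
      ofReal_ne_top (hWle' t ht x)) ht x,
    fun t ht x => toReal_le_of_le_ofReal
      (mul_nonneg hC.le (hGpos _ (by linarith) x).le) (hWle' t ht x)⟩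
end

section
/- Let β ∈ (0,1), η > 0, μ > 0 and c > 0. Then there exists K₀ > 0 such that for every K ≥ K₀ and every measurable F : (0,∞) → [0,∞] satisfying F(t) ≥ K·E_β(−μ t^β) + c·∫₀^t E_β(−μ (t−s)^β) F(s)^{1+η} ds for all t > 0, there exists t₀ > 0 with F(t) = ∞ for all t ≥ t₀. -/
open MeasureTheory ENNReal

/-- The Mittag-Leffler function `E_β(z) = ∑_{k≥0} z^k / Γ(1+βk)`. -/
noncomputable def mittagLeffler (β z : ℝ) : ℝ :=
  ∑' k : ℕ, z ^ k / Real.Gamma (1 + β * k)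

lemma gamma_lb' {y : ℝ} (hy : 1 ≤ y) : (1/2 : ℝ) ≤ Real.Gamma y := by
  have h2 : ∀ z : ℝ, 2 ≤ z → (1:ℝ) ≤ Real.Gamma z := by
    intro z hz
    calc (1:ℝ) = Real.Gamma 2 := Real.Gamma_two.symm
    _ ≤ Real.Gamma z :=
      (Real.Gamma_strictMonoOn_Ici.monotoneOn (by norm_num) hz hz)
  rcases le_or_gt 2 y with h | h
  · linarith [h2 y h]
  · have hy0 : y ≠ 0 := by linarith
    have := Real.Gamma_add_one hy0
    have h1 : (1:ℝ) ≤ Real.Gamma (y+1) := h2 _ (by linarith)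
    nlinarith [Real.Gamma_pos_of_pos (show (0:ℝ) < y by linarith)]

lemma ml_lb' {β x : ℝ} (hβ : 0 < β) (hx0 : 0 ≤ x) (hx : x ≤ 1/5) :
    (1/2 : ℝ) ≤ mittagLeffler β (-x) := by
  set f : ℕ → ℝ := fun k => (-x) ^ k / Real.Gamma (1 + β * k) with hf
  have hgam : ∀ k : ℕ, (1/2 : ℝ) ≤ Real.Gamma (1 + β * k) := by
    intro k
    refine gamma_lb' ?_
    have : (0:ℝ) ≤ β * k := by positivity
    linarith
  have habs : ∀ k : ℕ, |f k| ≤ 2 * x ^ k := by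
    intro k
    have hg := hgam k
    rw [hf, abs_div, abs_pow, abs_neg, abs_of_nonneg hx0,
      abs_of_nonneg (by linarith : (0:ℝ) ≤ Real.Gamma (1 + β * k))]
    rw [div_le_iff₀ (by linarith)]
    have hpk : (0:ℝ) ≤ x ^ k := by positivity
    nlinarith
  have hx1 : x < 1 := by linarith
  have hsumg : Summable (fun k : ℕ => 2 * x ^ k) :=
    (summable_geometric_of_lt_one hx0 hx1).mul_left 2
  have hsumf : Summable f :=
    Summable.of_abs (hsumg.of_nonneg_of_le (fun k => abs_nonneg _) habs)
  have hf0 : f 0 = 1 := by simp [hf, Real.Gamma_one]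
  have hsplit : mittagLeffler β (-x) = 1 + ∑' k : ℕ, f (k + 1) := by
    have : mittagLeffler β (-x) = ∑' k : ℕ, f k := rfl
    rw [this, Summable.tsum_eq_zero_add hsumf, hf0]
  have hsumf' : Summable (fun k : ℕ => f (k + 1)) :=
    (summable_nat_add_iff (f := f) 1).mpr hsumf
  have hsumabs : Summable (fun k : ℕ => |f (k + 1)|) :=
    (summable_nat_add_iff (f := fun k => |f k|) 1).mpr hsumf.abs
  have hsumg' : Summable (fun k : ℕ => 2 * x ^ (k + 1)) :=
    (summable_nat_add_iff (f := fun k : ℕ => 2 * x ^ k) 1).mpr hsumg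
  have htail : |∑' k : ℕ, f (k + 1)| ≤ 1/2 := by
    have h1 : |∑' k : ℕ, f (k + 1)| ≤ ∑' k : ℕ, |f (k + 1)| := by
      simpa [Real.norm_eq_abs] using
        norm_tsum_le_tsum_norm (f := fun k : ℕ => f (k + 1))
          (by simpa [Real.norm_eq_abs] using hsumabs)
    have h2 : ∑' k : ℕ, |f (k + 1)| ≤ ∑' k : ℕ, 2 * x ^ (k + 1) :=
      Summable.tsum_le_tsum (fun k => habs (k + 1)) hsumabs hsumg'
    have h3 : ∑' k : ℕ, 2 * x ^ (k + 1) = 2 * x * (1 - x)⁻¹ := by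
      have he : ∀ k : ℕ, 2 * x ^ (k + 1) = (2 * x) * x ^ k := by
        intro k; ring
      rw [tsum_congr he, tsum_mul_left, tsum_geometric_of_lt_one hx0 hx1]
    have h4 : 2 * x * (1 - x)⁻¹ ≤ 1/2 := by
      rw [mul_inv_le_iff₀ (by linarith)]
      linarith
    linarith
  rw [hsplit]
  have := abs_le.mp htail
  linarith

lemma step_ineq' {η D L : ℝ} (hη : 0 < η) (hD : 0 < D) (hL : 1 ≤ L)
    (hDL : ((4:ℝ) ^ η⁻¹) / D ≤ L ^ η) (n : ℕ) :
    L * ((4:ℝ) ^ η⁻¹) ^ (n + 1) ≤ D * (1/2 : ℝ) ^ n * (L * ((4:ℝ) ^ η⁻¹) ^ n) ^ (1 + η) := by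
  set Q : ℝ := (4:ℝ) ^ η⁻¹ with hQ
  have hQ0 : 0 < Q := Real.rpow_pos_of_pos (by norm_num) _
  have hL0 : (0:ℝ) < L := by linarith
  have hP0 : (0:ℝ) < L * Q ^ n := by positivity
  have h1 : (L * Q ^ n) ^ (1 + η) = (L * Q ^ n) * ((L * Q ^ n) ^ η) := by
    rw [Real.rpow_add hP0, Real.rpow_one]
  have h2 : (L * Q ^ n) ^ η = L ^ η * (4:ℝ) ^ n := by
    rw [Real.mul_rpow hL0.le (pow_nonneg hQ0.le n)]
    congr 1
    have e1 : Q ^ n = (4:ℝ) ^ (η⁻¹ * (n:ℝ)) := by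
      rw [← Real.rpow_natCast Q n, hQ,
        ← Real.rpow_mul (by norm_num : (0:ℝ) ≤ 4)]
    rw [e1, ← Real.rpow_mul (by norm_num : (0:ℝ) ≤ 4)]
    have e2 : η⁻¹ * (n:ℝ) * η = (n:ℝ) := by
      field_simp
    rw [e2, Real.rpow_natCast]
  have hLη : 0 < L ^ η := Real.rpow_pos_of_pos hL0 _
  have hkey : Q ≤ D * L ^ η * (2:ℝ) ^ n := by
    have h2n : (1:ℝ) ≤ (2:ℝ) ^ n := one_le_pow₀ (by norm_num)
    have : Q ≤ D * L ^ η := by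
      rw [div_le_iff₀ hD] at hDL; linarith
    nlinarith [mul_pos hD hLη]
  have hhalf : (1/2:ℝ) ^ n * (4:ℝ) ^ n = (2:ℝ) ^ n := by
    rw [← mul_pow]; norm_num
  calc L * Q ^ (n + 1) = Q * (L * Q ^ n) := by ring
  _ ≤ (D * L ^ η * (2:ℝ) ^ n) * (L * Q ^ n) := by
      exact mul_le_mul_of_nonneg_right hkey hP0.le
  _ = D * (1/2:ℝ) ^ n * ((L * Q ^ n) * (L ^ η * (4:ℝ) ^ n)) := by
      rw [← hhalf]; ring
  _ = D * (1/2 : ℝ) ^ n * (L * Q ^ n) ^ (1 + η) := by rw [h1, h2]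

/-- Theorem 1.4, second part. For any `η > 0` there exists
`K₀ > 0` such that every `F` satisfying
`F(t) ≥ K E_β(-μ t^β) + c ∫₀^t E_β(-μ (t-s)^β) F(s)^{1+η} ds` with `K ≥ K₀`
blows up in finite time. -/
theorem dirichlet_blowup_large_data
    (β η μ c : ℝ)
    (hβ : β ∈ Set.Ioo (0 : ℝ) 1)
    (hη : 0 < η) (hμ : 0 < μ) (hc : 0 < c) :
    ∃ K₀ : ℝ, 0 < K₀ ∧
      ∀ K : ℝ, K₀ ≤ K →
        ∀ F : ℝ → ℝ≥0∞, Measurable F →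
          (∀ t : ℝ, 0 < t →
            ENNReal.ofReal (K * mittagLeffler β (-(μ * t ^ β)))
              + ENNReal.ofReal c
                * ∫⁻ s in Set.Ioo (0 : ℝ) t,
                    ENNReal.ofReal (mittagLeffler β (-(μ * (t - s) ^ β))) * (F s) ^ (1 + η)
              ≤ F t) →
          ∃ t₀ : ℝ, 0 < t₀ ∧ ∀ t : ℝ, t₀ ≤ t → F t = ∞ := by
  obtain ⟨hβ1, hβ2⟩ := hβ
  set T : ℝ := (1 / (5 * μ)) ^ β⁻¹ with hTdef
  have hT0 : 0 < T := Real.rpow_pos_of_pos (by positivity) _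
  have hTβ : μ * T ^ β = 1/5 := by
    rw [hTdef, Real.rpow_inv_rpow (by positivity) hβ1.ne']
    field_simp
  have hE : ∀ r : ℝ, 0 < r → r ≤ T → (1/2:ℝ) ≤ mittagLeffler β (-(μ * r ^ β)) := by
    intro r hr hrT
    refine ml_lb' hβ1 (by positivity) ?_
    have h1 : r ^ β ≤ T ^ β := Real.rpow_le_rpow hr.le hrT hβ1.le
    calc μ * r ^ β ≤ μ * T ^ β := by nlinarith
    _ = 1/5 := hTβ
  set Q : ℝ := (4:ℝ) ^ η⁻¹ with hQdef
  have hQ0 : 0 < Q := Real.rpow_pos_of_pos (by norm_num) _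
  have hQ1 : 1 < Q := by
    rw [hQdef]
    calc (1:ℝ) = (4:ℝ) ^ (0:ℝ) := (Real.rpow_zero 4).symm
    _ < 4 ^ η⁻¹ := Real.rpow_lt_rpow_of_exponent_lt (by norm_num) (by positivity)
  set D : ℝ := c * T / 8 with hDdef
  have hD0 : 0 < D := by rw [hDdef]; positivity
  set L : ℝ := max 1 ((Q / D) ^ η⁻¹) with hLdef
  have hL1 : 1 ≤ L := le_max_left _ _
  have hL0 : 0 < L := by linarith
  have hDL : Q / D ≤ L ^ η := by
    have h0 : 0 < Q / D := by positivity
    calc Q / D = ((Q/D) ^ η⁻¹) ^ η := (Real.rpow_inv_rpow h0.le hη.ne').symm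
    _ ≤ L ^ η := Real.rpow_le_rpow (Real.rpow_nonneg h0.le _) (le_max_right _ _) hη.le
  refine ⟨2 * L, by linarith, ?_⟩
  intro K hK F _hFmeas hineq
  have hK0 : 0 < K := by linarith
  have hbase : ∀ t : ℝ, 0 < t → t ≤ T → ENNReal.ofReal (K / 2) ≤ F t := by
    intro t ht htT
    refine le_trans ?_ (le_trans (self_le_add_right _ _) (hineq t ht))
    refine ENNReal.ofReal_le_ofReal ?_
    have := hE t ht htT
    nlinarith
  set τ : ℕ → ℝ := fun n => (T/2) * (1 - (1/2:ℝ)^n) with hτdef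
  have hτ0 : ∀ n, 0 ≤ τ n := by
    intro n
    have h1 : (1/2:ℝ)^n ≤ 1 := pow_le_one₀ (by norm_num) (by norm_num)
    simp only [hτdef]
    nlinarith
  have hτlt : ∀ n, τ n < T/2 := by
    intro n
    have h2 : (0:ℝ) < (1/2:ℝ)^n := by positivity
    simp only [hτdef]
    nlinarith
  have hτsucc : ∀ n, τ (n+1) - τ n = (T/4) * (1/2:ℝ)^n := by
    intro n
    simp only [hτdef]
    rw [pow_succ]
    ring
  have hτmono : ∀ n, τ n < τ (n+1) := by
    intro n
    have := hτsucc n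
    have h2 : (0:ℝ) < (1/2:ℝ)^n := by positivity
    nlinarith
  have hmain : ∀ n : ℕ, ∀ t : ℝ, τ n < t → t ≤ T →
      ENNReal.ofReal (L * Q ^ n) ≤ F t := by
    intro n
    induction n with
    | zero =>
      intro t ht htT
      have hτz : τ 0 = 0 := by simp [hτdef]
      have ht0 : 0 < t := by rw [hτz] at ht; exact ht
      refine le_trans (ENNReal.ofReal_le_ofReal ?_) (hbase t ht0 htT)
      simp only [pow_zero, mul_one]
      linarith
    | succ n ih =>
      intro t ht htT
      have ht0 : 0 < t := lt_of_le_of_lt (hτ0 (n+1)) ht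
      have hsub : Set.Ioo (τ n) (τ (n+1)) ⊆ Set.Ioo 0 t := by
        intro s hs
        exact ⟨lt_of_le_of_lt (hτ0 n) hs.1, lt_trans hs.2 ht⟩
      have hptw : ∀ s ∈ Set.Ioo (τ n) (τ (n+1)),
          ENNReal.ofReal ((1/2) * (L * Q ^ n) ^ (1+η)) ≤
            ENNReal.ofReal (mittagLeffler β (-(μ * (t - s) ^ β))) * (F s) ^ (1 + η) := by
        intro s hs
        have hs0 : 0 < s := lt_of_le_of_lt (hτ0 n) hs.1
        have hst : s < t := lt_trans hs.2 ht
        have hsT : s ≤ T := le_trans hst.le htT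
        have hts0 : 0 < t - s := by linarith
        have htsT : t - s ≤ T := by linarith
        have hEts := hE (t - s) hts0 htsT
        have hFs : ENNReal.ofReal (L * Q ^ n) ≤ F s := ih s hs.1 hsT
        have hLQ : (0:ℝ) < L * Q ^ n := by positivity
        calc ENNReal.ofReal ((1/2) * (L * Q ^ n) ^ (1+η))
            = ENNReal.ofReal (1/2) * ENNReal.ofReal ((L * Q ^ n) ^ (1+η)) :=
              ENNReal.ofReal_mul (by norm_num)
        _ = ENNReal.ofReal (1/2) * (ENNReal.ofReal (L * Q ^ n)) ^ (1+η) := by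
              rw [ENNReal.ofReal_rpow_of_nonneg hLQ.le (by linarith)]
        _ ≤ ENNReal.ofReal (mittagLeffler β (-(μ * (t - s) ^ β))) * (F s) ^ (1+η) :=
              mul_le_mul' (ENNReal.ofReal_le_ofReal hEts)
                (ENNReal.rpow_le_rpow hFs (by linarith))
      have hint : ENNReal.ofReal ((1/2) * (L * Q ^ n) ^ (1+η)) * ENNReal.ofReal (τ (n+1) - τ n)
          ≤ ∫⁻ s in Set.Ioo (0:ℝ) t,
              ENNReal.ofReal (mittagLeffler β (-(μ * (t - s) ^ β))) * (F s) ^ (1 + η) := by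
        calc ENNReal.ofReal ((1/2) * (L * Q ^ n) ^ (1+η)) * ENNReal.ofReal (τ (n+1) - τ n)
            = ∫⁻ _ in Set.Ioo (τ n) (τ (n+1)),
                ENNReal.ofReal ((1/2) * (L * Q ^ n) ^ (1+η)) := by
              rw [setLIntegral_const, Real.volume_Ioo]
        _ ≤ ∫⁻ s in Set.Ioo (τ n) (τ (n+1)),
              ENNReal.ofReal (mittagLeffler β (-(μ * (t - s) ^ β))) * (F s) ^ (1 + η) :=
              setLIntegral_mono' measurableSet_Ioo hptw
        _ ≤ _ := lintegral_mono_set hsub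
      refine le_trans ?_ (le_trans (self_le_add_left _ _) (hineq t ht0))
      calc ENNReal.ofReal (L * Q ^ (n+1))
          ≤ ENNReal.ofReal (c * ((1/2) * (L * Q ^ n) ^ (1+η) * (τ (n+1) - τ n))) := by
            refine ENNReal.ofReal_le_ofReal ?_
            rw [hτsucc n]
            have hst := step_ineq' hη hD0 hL1 hDL n
            rw [← hQdef] at hst
            calc L * Q ^ (n+1) ≤ D * (1/2:ℝ)^n * (L * Q ^ n) ^ (1+η) := hst
            _ = c * (1/2 * (L * Q ^ n) ^ (1+η) * (T/4 * (1/2:ℝ)^n)) := by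
                rw [hDdef]; ring
      _ = ENNReal.ofReal c * (ENNReal.ofReal ((1/2) * (L * Q ^ n) ^ (1+η))
            * ENNReal.ofReal (τ (n+1) - τ n)) := by
            have hτd : 0 ≤ τ (n+1) - τ n := by linarith [hτmono n]
            have hLQ : (0:ℝ) < L * Q ^ n := by positivity
            rw [← ENNReal.ofReal_mul (by positivity : (0:ℝ) ≤ (1/2) * (L * Q ^ n) ^ (1+η)),
              ← ENNReal.ofReal_mul hc.le]
      _ ≤ ENNReal.ofReal c * ∫⁻ s in Set.Ioo (0:ℝ) t,
            ENNReal.ofReal (mittagLeffler β (-(μ * (t - s) ^ β))) * (F s) ^ (1 + η) :=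
            mul_le_mul_right hint _
  have hinf1 : ∀ t : ℝ, T/2 ≤ t → t ≤ T → F t = ⊤ := by
    intro t ht htT
    by_contra hne
    have hb : ∀ n : ℕ, L * Q ^ n ≤ (F t).toReal := by
      intro n
      have h1 : ENNReal.ofReal (L * Q ^ n) ≤ F t :=
        hmain n t (lt_of_lt_of_le (hτlt n) ht) htT
      exact (ENNReal.ofReal_le_iff_le_toReal hne).mp h1
    have htend : Filter.Tendsto (fun n : ℕ => L * Q ^ n) Filter.atTop Filter.atTop :=
      (tendsto_pow_atTop_atTop_of_one_lt hQ1).const_mul_atTop hL0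
    obtain ⟨n, hn⟩ := (htend.eventually_ge_atTop ((F t).toReal + 1)).exists
    linarith [hb n]
  have hprop : ∀ m : ℕ, ∀ t : ℝ, T/2 ≤ t → t ≤ T + m * (T/2) → F t = ⊤ := by
    intro m
    induction m with
    | zero =>
      intro t ht htT
      exact hinf1 t ht (by simpa using htT)
    | succ m ih =>
      intro t ht htm
      rcases le_or_gt t (T + m * (T/2)) with h | h
      · exact ih t ht h
      have hm0 : (0:ℝ) ≤ (m:ℝ) := Nat.cast_nonneg m
      have htT : T < t := by nlinarith
      have ht0 : 0 < t := by linarith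
      have htm' : t ≤ T + ((m:ℝ) + 1) * (T/2) := by
        push_cast at htm
        linarith
      set a : ℝ := max (t - T) (T/2) with hadef
      set b : ℝ := t - T/2 with hbdef
      have hab : a < b := by
        rw [hadef, hbdef]
        apply max_lt <;> linarith
      have hsub2 : Set.Ioo a b ⊆ Set.Ioo 0 t := by
        intro s hs
        have h1 : T/2 ≤ a := le_max_right _ _
        constructor
        · linarith [hs.1]
        · rw [hbdef] at hs; linarith [hs.2]
      have hFs : ∀ s ∈ Set.Ioo a b, F s = ⊤ := by
        intro s hs
        refine ih s (le_of_lt (lt_of_le_of_lt (le_max_right _ _) hs.1)) ?_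
        have h2 : s < t - T/2 := hs.2
        linarith
      have hptw2 : ∀ s ∈ Set.Ioo a b, (⊤:ℝ≥0∞) ≤
          ENNReal.ofReal (mittagLeffler β (-(μ * (t - s) ^ β))) * (F s) ^ (1 + η) := by
        intro s hs
        have h1 : t - T ≤ a := le_max_left _ _
        have hts0 : 0 < t - s := by have := hs.2; rw [hbdef] at this; linarith
        have htsT : t - s ≤ T := by have := hs.1; linarith
        have hEts := hE (t - s) hts0 htsT
        rw [hFs s hs, ENNReal.top_rpow_of_pos (by linarith : (0:ℝ) < 1 + η),
          ENNReal.mul_top (by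
            exact (ENNReal.ofReal_pos.mpr (by linarith)).ne')]
      have hint2 : (∫⁻ s in Set.Ioo (0:ℝ) t,
          ENNReal.ofReal (mittagLeffler β (-(μ * (t - s) ^ β))) * (F s) ^ (1 + η)) = ⊤ := by
        rw [eq_top_iff]
        calc (⊤:ℝ≥0∞) = ∫⁻ _ in Set.Ioo a b, (⊤:ℝ≥0∞) := by
              rw [setLIntegral_const, Real.volume_Ioo,
                ENNReal.top_mul (ENNReal.ofReal_pos.mpr (by linarith)).ne']
        _ ≤ ∫⁻ s in Set.Ioo a b,
              ENNReal.ofReal (mittagLeffler β (-(μ * (t - s) ^ β))) * (F s) ^ (1 + η) :=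
              setLIntegral_mono' measurableSet_Ioo hptw2
        _ ≤ _ := lintegral_mono_set hsub2
      have hfin := hineq t ht0
      rw [hint2, ENNReal.mul_top ((ENNReal.ofReal_pos.mpr hc).ne'), add_top] at hfin
      exact top_le_iff.mp hfin
  refine ⟨T/2, by positivity, ?_⟩
  intro t ht
  obtain ⟨m, hm⟩ := exists_nat_ge (t / (T/2))
  have h2 : (0:ℝ) < T/2 := by positivity
  rw [div_le_iff₀ h2] at hm
  exact hprop m t ht (by linarith)
end

section
/- Let d ≥ 1 be an integer, α ∈ (0,2), β ∈ (0,1). Let G be a measurable kernel satisfying the lower heat-kernel bound, and let V₀ : ℝ^d → [0,∞) be measurable and not almost everywhere zero. Then there exist T > 0 and C > 0 such that for all t ≥ T and all x ∈ ℝ^d with |x| ≤ t^{β/α}, ∫_{ℝ^d} G(t, x−y) V₀(y) dy ≥ C t^{-βd/α}. -/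
open MeasureTheory ENNReal

/-!
On a set `A ⊆ B(0, R)` of positive measure where `V₀ ≥ ε`, the points `x - y` with
`‖x‖ ≤ t ^ (β / α)` and `y ∈ A` satisfy `‖x - y‖ ≤ 2 t ^ (β / α)` as soon as
`R ≤ t ^ (β / α)`. In that range the two branches of the lower heat-kernel bound are comparable, so
`G(t, x - y) ≳ t ^ (-β d / α)` on `A`, and integrating over `A` gives the claim.
-/

lemma exists_pos_measure_setOf_le_inter_ball {E : Type*} [SeminormedAddCommGroup E]
    [MeasurableSpace E] {μ : Measure E} {f : E → ℝ} (hf : 0 ≤ f) (hf0 : ¬ f =ᵐ[μ] 0) :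
    ∃ ε > 0, ∃ R > 0, 0 < μ ({y | ε ≤ f y} ∩ Metric.ball 0 R) := by
  by_contra! hnull
  have hcover : {y | f y ≠ 0} ⊆
      ⋃ (m : ℕ) (n : ℕ),
        {y | 1 / ((m : ℝ) + 1) ≤ f y} ∩ Metric.ball 0 ((n : ℝ) + 1) := by
    intro y (hy : f y ≠ 0)
    obtain ⟨m, hm⟩ := exists_nat_one_div_lt ((hf y).lt_of_ne' hy)
    obtain ⟨n, hn⟩ := exists_nat_gt ‖y‖
    simp only [Set.mem_iUnion]
    exact ⟨m, n, hm.le, by rw [mem_ball_zero_iff]; linarith⟩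
  exact hf0 (ae_iff.2 (measure_mono_null hcover (measure_iUnion_null fun m ↦
    measure_iUnion_null fun n ↦
      nonpos_iff_eq_zero.1 (hnull _ (by positivity) _ (by positivity)))))

lemma mul_measure_le_lintegral_of_ae_le {X : Type*} [MeasurableSpace X] {μ : Measure X}
    {s : Set X} (hs : MeasurableSet s) {f : X → ℝ≥0∞} {c : ℝ≥0∞}
    (hf : ∀ᵐ y ∂μ, y ∈ s → c ≤ f y) : c * μ s ≤ ∫⁻ y, f y ∂μ :=
  calc c * μ s = ∫⁻ _ in s, c ∂μ := (setLIntegral_const s c).symm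
    _ ≤ ∫⁻ y in s, f y ∂μ := setLIntegral_mono_ae' hs hf
    _ ≤ ∫⁻ y, f y ∂μ := setLIntegral_le_lintegral s f

lemma two_rpow_neg_mul_rpow_le_min {α β d t r : ℝ} (hα : 0 < α) (hd : 0 ≤ d) (ht : 0 < t)
    (hr : 0 < r) (hrt : r ≤ 2 * t ^ (β / α)) :
    2 ^ (-(d + α)) * t ^ (-(β * d) / α) ≤
      min (t ^ (-(β * d) / α)) (t ^ β / r ^ (d + α)) := by
  have hdα : 0 ≤ d + α := by linarith
  refine le_min (mul_le_of_le_one_left (by positivity)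
    (Real.rpow_le_one_of_one_le_of_nonpos one_le_two (by linarith))) ?_
  have hexp : -(β * d) / α = β - β / α * (d + α) := by field_simp; ring
  calc 2 ^ (-(d + α)) * t ^ (-(β * d) / α)
      = t ^ β / (2 * t ^ (β / α)) ^ (d + α) := by
        rw [hexp, Real.rpow_sub ht, Real.rpow_neg zero_le_two,
          Real.mul_rpow zero_le_two (by positivity), ← Real.rpow_mul ht.le]
        field_simp
    _ ≤ t ^ β / r ^ (d + α) := by gcongr

theorem heat_semigroup_lower_bound_general
    (d : ℕ) (hd : 1 ≤ d) (α β : ℝ)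
    (hα : α ∈ Set.Ioo (0 : ℝ) 2) (hβ : β ∈ Set.Ioo (0 : ℝ) 1)
    (G : ℝ → EuclideanSpace ℝ (Fin d) → ℝ)
    (c₁ : ℝ) (hc₁ : 0 < c₁)
    (hGlower : ∀ t : ℝ, 0 < t → ∀ x : EuclideanSpace ℝ (Fin d),
      c₁ * min (t ^ (-(β * d) / α)) (t ^ β / ‖x‖ ^ ((d : ℝ) + α)) ≤ G t x)
    (V₀ : EuclideanSpace ℝ (Fin d) → ℝ)
    (hV₀meas : Measurable V₀) (hV₀nonneg : ∀ x, 0 ≤ V₀ x)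
    (hV₀ne : ¬ (V₀ =ᵐ[volume] 0)) :
    ∃ T : ℝ, 0 < T ∧ ∃ C : ℝ, 0 < C ∧
      ∀ t : ℝ, T ≤ t → ∀ x : EuclideanSpace ℝ (Fin d), ‖x‖ ≤ t ^ (β / α) →
        ENNReal.ofReal (C * t ^ (-(β * d) / α))
          ≤ ∫⁻ y, ENNReal.ofReal (G t (x - y)) * ENNReal.ofReal (V₀ y) := by
  have : Nonempty (Fin d) := ⟨⟨0, hd⟩⟩
  obtain ⟨ε, hε, R, hR, hApos⟩ := exists_pos_measure_setOf_le_inter_ball hV₀nonneg hV₀ne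
  set A := {y | ε ≤ V₀ y} ∩ Metric.ball 0 R
  have hAmeas : MeasurableSet A :=
    (measurableSet_le measurable_const hV₀meas).inter measurableSet_ball
  have hAfin : volume A ≠ ∞ :=
    measure_ne_top_of_subset Set.inter_subset_right measure_ball_lt_top.ne
  set κ : ℝ := 2 ^ (-((d : ℝ) + α))
  refine ⟨R ^ (α / β), by positivity, c₁ * κ * ε * (volume A).toReal,
    by have := ENNReal.toReal_pos hApos.ne' hAfin; positivity, fun t ht x hx ↦ ?_⟩
  have ht0 : 0 < t := (Real.rpow_pos_of_pos hR _).trans_le ht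
  have hRt : R ≤ t ^ (β / α) := by
    rwa [← inv_div, Real.le_rpow_inv_iff_of_pos hR.le ht0.le (div_pos hα.1 hβ.1)]
  -- At `y = x` the second branch of the bound is the junk value `t ^ β / 0 = 0`.
  have hG : ∀ y ∈ A, y ≠ x → c₁ * (κ * t ^ (-(β * d) / α)) ≤ G t (x - y) := by
    intro y hy hyx
    refine (mul_le_mul_of_nonneg_left ?_ hc₁.le).trans (hGlower t ht0 (x - y))
    refine two_rpow_neg_mul_rpow_le_min hα.1 d.cast_nonneg ht0
      (norm_pos_iff.2 (sub_ne_zero.2 hyx.symm)) ?_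
    calc ‖x - y‖ ≤ ‖x‖ + ‖y‖ := norm_sub_le x y
      _ ≤ 2 * t ^ (β / α) := by linarith [mem_ball_zero_iff.1 hy.2]
  calc ENNReal.ofReal (c₁ * κ * ε * (volume A).toReal * t ^ (-(β * d) / α))
      = ENNReal.ofReal (c₁ * (κ * t ^ (-(β * d) / α))) * ENNReal.ofReal ε * volume A := by
        rw [← ENNReal.ofReal_toReal hAfin, ← ENNReal.ofReal_mul (by positivity),
          ← ENNReal.ofReal_mul (by positivity), ENNReal.toReal_ofReal ENNReal.toReal_nonneg]
        ring_nf
    _ ≤ ∫⁻ y, ENNReal.ofReal (G t (x - y)) * ENNReal.ofReal (V₀ y) :=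
        mul_measure_le_lintegral_of_ae_le hAmeas <| (volume.ae_ne x).mono fun y hyx hy ↦
          mul_le_mul' (ENNReal.ofReal_le_ofReal (hG y hy hyx)) (ENNReal.ofReal_le_ofReal hy.1)

/-- Lemma 2.3. If `G` satisfies the lower heat-kernel bound and
`V₀ ≥ 0` is not a.e. zero, then there are `T > 0` and `C > 0` such that
`∫ G(t, x-y) V₀(y) dy ≥ C t^{-βd/α}` for all `t ≥ T` and `|x| ≤ t^{β/α}`. -/
theorem heat_semigroup_lower_bound
    (d : ℕ) (hd : 1 ≤ d) (α β : ℝ)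
    (hα : α ∈ Set.Ioo (0 : ℝ) 2) (hβ : β ∈ Set.Ioo (0 : ℝ) 1)
    (G : ℝ → EuclideanSpace ℝ (Fin d) → ℝ)
    (hGmeas : Measurable (Function.uncurry G))
    (hGnonneg : ∀ t x, 0 ≤ G t x)
    (c₁ : ℝ) (hc₁ : 0 < c₁)
    (hGlower : ∀ t : ℝ, 0 < t → ∀ x : EuclideanSpace ℝ (Fin d),
      c₁ * min (t ^ (-(β * d) / α)) (t ^ β / ‖x‖ ^ ((d : ℝ) + α)) ≤ G t x)
    (V₀ : EuclideanSpace ℝ (Fin d) → ℝ)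
    (hV₀meas : Measurable V₀) (hV₀nonneg : ∀ x, 0 ≤ V₀ x)
    (hV₀ne : ¬ (V₀ =ᵐ[volume] 0)) :
    ∃ T : ℝ, 0 < T ∧ ∃ C : ℝ, 0 < C ∧
      ∀ t : ℝ, T ≤ t → ∀ x : EuclideanSpace ℝ (Fin d), ‖x‖ ≤ t ^ (β / α) →
        ENNReal.ofReal (C * t ^ (-(β * d) / α))
          ≤ ∫⁻ y, ENNReal.ofReal (G t (x - y)) * ENNReal.ofReal (V₀ y) :=
  heat_semigroup_lower_bound_general d hd α β hα hβ G c₁ hc₁ hGlower V₀ hV₀meas hV₀nonneg hV₀ne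
end

section
/- Let d ≥ 1 be an integer, α ∈ (0,2), β ∈ (0,1), and suppose 0 < η ≤ α/(βd). Let G be a measurable kernel satisfying the lower heat-kernel bound, let V₀ : ℝ^d → [0,∞) be measurable and not almost everywhere zero, and let V : (0,∞) × ℝ^d → [0,∞] be a mild solution with initial data V₀. Then for every M > 0 there exists T₀ > 0 such that for all t ≥ T₀ and all x ∈ ℝ^d with |x| ≤ t^{β/α}, V(t,x) ≥ M. -/
/-!
On the parabolic ball `‖x‖ ≤ t ^ (β / α)` the lower bound on `G` gives
`G (t - s) (x - y) ≳ t ^ (-β d / α)` whenever `s ≤ t / 2` and `‖y‖ ≤ s ^ (β / α)`.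
Write `F s = parabolicMass (β / α) V s` for the mass of `V s` on the ball of radius
`s ^ (β / α)` and `ψ u = weightedPowIntegral F (1 + η) T u = ∫_T^u F(s)^(1+η) ds/s`.
The initial datum gives `F s ≳ 1`; the Duhamel term together with Jensen's inequality gives
`V t x ≳ t ^ (-β d / α) ψ (t / 2)` and hence `F s ≳ ψ (s / 2)`. Jensen loses a factor
`(s ^ (β d / α)) ^ (-η)`, which the hypothesis `η β d ≤ α` bounds below by `1 / s`: this is
where criticality enters. From `F ≳ 1` we get `ψ (2 u) ≥ ψ u + const`, so `ψ → ∞`, and from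
`F s ≳ ψ (s / 2)` we get `ψ t ≳ ψ (t / 4) ^ (1 + η)`; together these force `ψ` to outgrow
every power of `t`, so `t ^ (-β d / α) ψ (t / 2) → ∞`.
-/

open MeasureTheory ENNReal Filter Topology Set Metric

theorem lintegral_rpow_one_add_div_le {X : Type*} [MeasurableSpace X] (μ : Measure X)
    {f : X → ℝ≥0∞} (hf : AEMeasurable f μ) {η : ℝ} (hη : 0 < η) :
    (∫⁻ x, f x ∂μ) ^ (1 + η) / μ univ ^ η ≤ ∫⁻ x, f x ^ (1 + η) ∂μ := by
  have hp : (1 + η).HolderConjugate ((1 + η) / η) := by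
    rw [Real.holderConjugate_iff_eq_conjExponent (by linarith), add_sub_cancel_left]
  have hHolder := ENNReal.lintegral_mul_le_Lp_mul_Lq μ hp hf aemeasurable_const (g := fun _ => 1)
  simp only [Pi.mul_apply, mul_one, ENNReal.one_rpow, lintegral_const, one_mul] at hHolder
  refine ENNReal.div_le_of_le_mul ((ENNReal.rpow_le_rpow hHolder (by linarith)).trans_eq ?_)
  rw [ENNReal.mul_rpow_of_nonneg _ _ (by linarith), ← ENNReal.rpow_mul, ← ENNReal.rpow_mul,
    one_div_mul_cancel (by linarith), ENNReal.rpow_one, one_div, inv_div,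
    div_mul_cancel₀ _ (by linarith)]

theorem exists_setLIntegral_ball_ofReal_ne_zero {X : Type*} [PseudoMetricSpace X]
    [MeasurableSpace X] [OpensMeasurableSpace X] {μ : Measure X} {f : X → ℝ} (hf : Measurable f)
    (hf0 : 0 ≤ f) (hne : ¬ f =ᵐ[μ] 0) (x₀ : X) :
    ∃ R, 1 ≤ R ∧ ∫⁻ x in ball x₀ R, ENNReal.ofReal (f x) ∂μ ≠ 0 := by
  have hint : ∫⁻ x, ENNReal.ofReal (f x) ∂μ ≠ 0 := by
    rw [Ne, lintegral_eq_zero_iff hf.ennreal_ofReal]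
    refine fun h => hne (h.mono fun x hx => le_antisymm ?_ (hf0 x))
    simpa using hx
  by_contra! h
  refine hint ?_
  rw [← setLIntegral_univ, ← iUnion_ball_nat_succ x₀,
    ← withDensity_apply _ (.iUnion fun _ => measurableSet_ball)]
  refine measure_iUnion_null_iff.2 fun n => ?_
  rw [withDensity_apply _ measurableSet_ball]
  exact h (n + 1) (by linarith [n.cast_nonneg (α := ℝ)])

theorem two_rpow_mul_rpow_le_min {α β D t u r : ℝ} (hα : 0 < α) (hβ : 0 ≤ β) (hD : 0 ≤ D)
    (ht : 0 < t) (htu : t / 2 ≤ u) (hut : u ≤ t) (hr : 0 < r) (hrt : r ≤ 2 * t ^ (β / α)) :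
    2 ^ (-(β + D + α)) * t ^ (-(β / α * D)) ≤ min (u ^ (-(β * D) / α)) (u ^ β / r ^ (D + α)) := by
  have hu : 0 < u := by linarith
  rw [show -(β * D) / α = -(β / α * D) by ring]
  refine le_min ?_ ?_
  · calc 2 ^ (-(β + D + α)) * t ^ (-(β / α * D)) ≤ t ^ (-(β / α * D)) :=
          mul_le_of_le_one_left (by positivity)
            (Real.rpow_le_one_of_one_le_of_nonpos one_le_two (by linarith))
      _ ≤ u ^ (-(β / α * D)) :=
          Real.rpow_le_rpow_of_nonpos hu hut (neg_nonpos.2 (by positivity))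
  · rw [le_div_iff₀ (by positivity)]
    calc 2 ^ (-(β + D + α)) * t ^ (-(β / α * D)) * r ^ (D + α)
        ≤ 2 ^ (-(β + D + α)) * t ^ (-(β / α * D)) * (2 * t ^ (β / α)) ^ (D + α) := by
          gcongr
      _ = (t / 2) ^ β := by
          rw [Real.mul_rpow two_pos.le (by positivity), ← Real.rpow_mul ht.le,
            Real.div_rpow ht.le two_pos.le, show -(β + D + α) = -β + -(D + α) by ring,
            Real.rpow_add two_pos, show β / α * (D + α) = β / α * D + β by field_simp,
            Real.rpow_add ht, Real.rpow_neg two_pos.le, Real.rpow_neg two_pos.le,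
            Real.rpow_neg ht.le]
          field_simp
      _ ≤ u ^ β := by gcongr

theorem tendsto_nhds_top_of_add_le_two_mul {ψ : ℝ → ℝ≥0∞} (hψ : Monotone ψ) {T : ℝ} (hT : 0 < T)
    {δ : ℝ≥0∞} (hδ : δ ≠ 0) (hstep : ∀ u, T ≤ u → ψ u + δ ≤ ψ (2 * u)) :
    Tendsto ψ atTop (𝓝 ⊤) := by
  have hdyadic : ∀ n : ℕ, n * δ ≤ ψ (2 ^ n * T) := by
    intro n
    induction n with
    | zero => simp
    | succ n ih =>
      calc ((n + 1 : ℕ) : ℝ≥0∞) * δ = n * δ + δ := by push_cast; ring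
        _ ≤ ψ (2 ^ n * T) + δ := by gcongr
        _ ≤ ψ (2 ^ (n + 1) * T) := by
          rw [pow_succ', mul_assoc]
          exact hstep _ (le_mul_of_one_le_left hT.le (one_le_pow₀ one_le_two))
  have hsup : ⨆ u, ψ u = ⊤ := by
    refine top_le_iff.1 ?_
    calc ⊤ = ⨆ n : ℕ, (n : ℝ≥0∞) * δ := by rw [← ENNReal.iSup_mul, ENNReal.iSup_natCast, top_mul hδ]
      _ ≤ ⨆ u, ψ u := iSup_le fun n => (hdyadic n).trans (le_iSup ψ _)
  simpa [hsup] using tendsto_atTop_iSup hψ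

/-- `B * (t / T) ^ q` is a subsolution of the recursion once `κ * B ^ η ≥ 4 ^ q`. -/
theorem ofReal_mul_div_rpow_le_of_rpow_recursion {ψ : ℝ → ℝ≥0∞} {κ : ℝ≥0∞} {η q B T : ℝ}
    (hη : 0 ≤ η) (hq : 0 ≤ q) (hB : 0 < B) (hT : 0 < T)
    (hκB : ENNReal.ofReal (4 ^ q) ≤ κ * ENNReal.ofReal B ^ η)
    (hrec : ∀ t, 4 * T ≤ t → κ * ψ (t / 4) ^ (1 + η) ≤ ψ t)
    (hbase : ∀ t, T ≤ t → ENNReal.ofReal (4 ^ q * B) ≤ ψ t) {t : ℝ} (ht : T ≤ t) :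
    ENNReal.ofReal (B * (t / T) ^ q) ≤ ψ t := by
  obtain ⟨n, hn⟩ := pow_unbounded_of_one_lt (t / T) (by norm_num : (1 : ℝ) < 4)
  induction n generalizing t with
  | zero =>
    rw [pow_zero, div_lt_one hT] at hn
    exact absurd ht hn.not_ge
  | succ n ih =>
    by_cases hsmall : t ≤ 4 * T
    · refine le_trans (ENNReal.ofReal_le_ofReal ?_) (hbase t ht)
      have hpow : (t / T) ^ q ≤ 4 ^ q :=
        Real.rpow_le_rpow (div_nonneg (hT.le.trans ht) hT.le) ((div_le_iff₀ hT).2 hsmall) hq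
      rw [mul_comm]
      exact mul_le_mul_of_nonneg_right hpow hB.le
    push Not at hsmall
    set b := B * (t / 4 / T) ^ q
    have hBb : B ≤ b := le_mul_of_one_le_right hB.le
      (Real.one_le_rpow (by rw [le_div_iff₀ hT]; linarith) hq)
    have hb : ENNReal.ofReal b ≠ 0 := by simpa using hB.trans_le hBb
    have hψ : ENNReal.ofReal b ≤ ψ (t / 4) :=
      ih (by linarith) (by rw [div_div, mul_comm 4 T, ← div_div]; linarith [pow_succ' (4:ℝ) n])
    calc ENNReal.ofReal (B * (t / T) ^ q)
        = ENNReal.ofReal (4 ^ q) * ENNReal.ofReal b := by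
          rw [← ENNReal.ofReal_mul (by positivity), show t / T = 4 * (t / 4 / T) by ring,
            Real.mul_rpow (by norm_num) (div_nonneg (by linarith) hT.le), mul_left_comm]
      _ ≤ κ * ENNReal.ofReal B ^ η * ENNReal.ofReal b := by gcongr
      _ ≤ κ * ENNReal.ofReal b ^ (1 + η) := by
          rw [mul_assoc, ENNReal.rpow_add _ _ hb ENNReal.ofReal_ne_top, ENNReal.rpow_one,
            mul_comm (ENNReal.ofReal b)]
          gcongr
      _ ≤ κ * ψ (t / 4) ^ (1 + η) := by gcongr
      _ ≤ ψ t := hrec t hsmall.le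

theorem tendsto_rpow_neg_mul_of_rpow_recursion {ψ : ℝ → ℝ≥0∞} (htop : Tendsto ψ atTop (𝓝 ⊤))
    {κ : ℝ≥0∞} (hκ : κ ≠ 0) {η T : ℝ} (hη : 0 < η)
    (hrec : ∀ t, T ≤ t → κ * ψ (t / 4) ^ (1 + η) ≤ ψ t) {q : ℝ} (hq : 0 ≤ q) :
    Tendsto (fun t => ENNReal.ofReal (t ^ (-q)) * ψ t) atTop (𝓝 ⊤) := by
  have hκB : Tendsto (fun B => κ * ENNReal.ofReal B ^ η) atTop (𝓝 ⊤) := by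
    have := ENNReal.Tendsto.const_mul (a := κ) (ENNReal.tendsto_ofReal_atTop.ennrpow_const η)
      (Or.inl (by simp [hη]))
    rwa [ENNReal.top_rpow_of_pos hη, ENNReal.mul_top hκ] at this
  obtain ⟨B, hB, hB0⟩ :=
    ((hκB.eventually_const_le ofReal_lt_top).and (eventually_gt_atTop 0)).exists
  obtain ⟨T', hT'⟩ := eventually_atTop.1
    (htop.eventually_const_le (ofReal_lt_top (r := 4 ^ (q + 1) * B)))
  set T₀ := max T' (max T 1)
  have hT₀ : 0 < T₀ := lt_of_lt_of_le one_pos (le_max_of_le_right (le_max_right _ _))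
  have hlow : ∀ t, T₀ ≤ t → ENNReal.ofReal (B * (t / T₀) ^ (q + 1)) ≤ ψ t :=
    fun t ht => ofReal_mul_div_rpow_le_of_rpow_recursion hη.le (by linarith) hB0 hT₀ hB
      (fun t ht => hrec t (by linarith [le_max_left T 1, le_max_right T' (max T 1)]))
      (fun t ht => hT' t ((le_max_left _ _).trans ht)) ht
  refine tendsto_nhds_top_mono (ENNReal.tendsto_ofReal_atTop.comp
    (tendsto_id.const_mul_atTop (by positivity : 0 < B * T₀ ^ (-(q + 1))))) ?_
  filter_upwards [eventually_ge_atTop T₀] with t ht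
  have ht0 : 0 < t := hT₀.trans_le ht
  calc ENNReal.ofReal (B * T₀ ^ (-(q + 1)) * t)
      = ENNReal.ofReal (t ^ (-q)) * ENNReal.ofReal (B * (t / T₀) ^ (q + 1)) := by
        rw [← ENNReal.ofReal_mul (by positivity), Real.div_rpow ht0.le hT₀.le,
          Real.rpow_neg hT₀.le, Real.rpow_neg ht0.le, Real.rpow_add_one ht0.ne']
        congr 1
        field_simp
    _ ≤ ENNReal.ofReal (t ^ (-q)) * ψ t := by gcongr; exact hlow t ht

theorem tendsto_rpow_neg_mul_const_mul_div_two {ψ : ℝ → ℝ≥0∞} {q : ℝ}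
    (h : Tendsto (fun t => ENNReal.ofReal (t ^ (-q)) * ψ t) atTop (𝓝 ⊤)) {a : ℝ≥0∞}
    (ha : a ≠ 0) : Tendsto (fun t => ENNReal.ofReal (t ^ (-q)) * (a * ψ (t / 2))) atTop (𝓝 ⊤) := by
  have h2 := ENNReal.Tendsto.const_mul (h.comp (tendsto_id.atTop_div_const two_pos))
    (Or.inl top_ne_zero) (a := a * ENNReal.ofReal (2 ^ (-q)))
  rw [ENNReal.mul_top (mul_ne_zero ha (ENNReal.ofReal_pos.2 (by positivity)).ne')] at h2
  refine h2.congr' ?_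
  filter_upwards [eventually_gt_atTop 0] with t ht
  calc a * ENNReal.ofReal (2 ^ (-q)) * (ENNReal.ofReal ((t / 2) ^ (-q)) * ψ (t / 2))
      = ENNReal.ofReal (2 ^ (-q)) * ENNReal.ofReal ((t / 2) ^ (-q)) * (a * ψ (t / 2)) := by ring
    _ = ENNReal.ofReal (t ^ (-q)) * (a * ψ (t / 2)) := by
        rw [← ENNReal.ofReal_mul (by positivity), ← Real.mul_rpow (by norm_num) (by positivity),
          mul_div_cancel₀ t two_ne_zero]

noncomputable def weightedPowIntegral (F : ℝ → ℝ≥0∞) (p T u : ℝ) : ℝ≥0∞ :=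
  ∫⁻ s in Ioc T u, ENNReal.ofReal s⁻¹ * F s ^ p

section weightedPowIntegral

variable {F : ℝ → ℝ≥0∞} {p T : ℝ}

theorem monotone_weightedPowIntegral : Monotone (weightedPowIntegral F p T) :=
  fun _ _ h => lintegral_mono_set (Ioc_subset_Ioc_right h)

theorem weightedPowIntegral_add_setLIntegral {a b : ℝ} (hTa : T ≤ a) (hab : a ≤ b) :
    weightedPowIntegral F p T a + ∫⁻ s in Ioc a b, ENNReal.ofReal s⁻¹ * F s ^ p =
      weightedPowIntegral F p T b := by
  rw [weightedPowIntegral, weightedPowIntegral,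
    ← lintegral_union measurableSet_Ioc (Ioc_disjoint_Ioc_of_le le_rfl),
    Ioc_union_Ioc_eq_Ioc hTa hab]

theorem ofReal_mul_rpow_le_setLIntegral_Ioc {m : ℝ≥0∞} {a b : ℝ} (ha : 0 < a) (hab : a ≤ b)
    (hp : 0 ≤ p) (hF : ∀ s ∈ Ioc a b, m ≤ F s) :
    ENNReal.ofReal ((b - a) / b) * m ^ p ≤ ∫⁻ s in Ioc a b, ENNReal.ofReal s⁻¹ * F s ^ p := by
  calc ENNReal.ofReal ((b - a) / b) * m ^ p = ∫⁻ _ in Ioc a b, ENNReal.ofReal b⁻¹ * m ^ p := by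
        rw [setLIntegral_const, Real.volume_Ioc, mul_right_comm,
          ← ENNReal.ofReal_mul (inv_nonneg.2 (ha.le.trans hab)), div_eq_inv_mul]
    _ ≤ _ := setLIntegral_mono' measurableSet_Ioc fun s hs =>
        mul_le_mul' (ENNReal.ofReal_le_ofReal (inv_anti₀ (ha.trans hs.1) hs.2))
          (ENNReal.rpow_le_rpow (hF s hs) hp)

theorem weightedPowIntegral_add_le_two_mul {m : ℝ≥0∞} (hT : 0 < T) (hp : 0 ≤ p)
    (hF : ∀ s, T ≤ s → m ≤ F s) {u : ℝ} (hu : T ≤ u) :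
    weightedPowIntegral F p T u + ENNReal.ofReal (1 / 2) * m ^ p ≤
      weightedPowIntegral F p T (2 * u) := by
  have hu0 : 0 < u := hT.trans_le hu
  have h := ofReal_mul_rpow_le_setLIntegral_Ioc hu0 (by linarith : u ≤ 2 * u) hp
    (fun s hs => hF s (hu.trans hs.1.le))
  rw [show (2 * u - u) / (2 * u) = 1 / 2 by field_simp; ring] at h
  rw [← weightedPowIntegral_add_setLIntegral hu (by linarith : u ≤ 2 * u)]
  gcongr

theorem tendsto_weightedPowIntegral_nhds_top {m : ℝ≥0∞} (hm : m ≠ 0) (hT : 0 < T) (hp : 0 ≤ p)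
    (hF : ∀ s, T ≤ s → m ≤ F s) : Tendsto (weightedPowIntegral F p T) atTop (𝓝 ⊤) := by
  refine tendsto_nhds_top_of_add_le_two_mul monotone_weightedPowIntegral hT ?_
    fun u hu => weightedPowIntegral_add_le_two_mul hT hp hF hu
  simp [ENNReal.rpow_eq_zero_iff, hm, hp.not_gt]

theorem mul_rpow_weightedPowIntegral_div_four_le {k : ℝ≥0∞} (hT : 0 < T) (hp : 0 ≤ p)
    (hF : ∀ s, 2 * T ≤ s → k * weightedPowIntegral F p T (s / 2) ≤ F s) {t : ℝ} (ht : 4 * T ≤ t) :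
    ENNReal.ofReal (1 / 2) * k ^ p * weightedPowIntegral F p T (t / 4) ^ p ≤
      weightedPowIntegral F p T t := by
  have ht0 : 0 < t := by linarith
  have hk : ∀ s ∈ Ioc (t / 2) t, k * weightedPowIntegral F p T (t / 4) ≤ F s := fun s hs =>
    le_trans (by gcongr; exact monotone_weightedPowIntegral (by linarith [hs.1]))
      (hF s (by linarith [hs.1]))
  calc ENNReal.ofReal (1 / 2) * k ^ p * weightedPowIntegral F p T (t / 4) ^ p
      = ENNReal.ofReal ((t - t / 2) / t) * (k * weightedPowIntegral F p T (t / 4)) ^ p := by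
        rw [ENNReal.mul_rpow_of_nonneg _ _ hp, mul_assoc]
        congr 2
        field_simp
        ring
    _ ≤ ∫⁻ s in Ioc (t / 2) t, ENNReal.ofReal s⁻¹ * F s ^ p :=
        ofReal_mul_rpow_le_setLIntegral_Ioc (by linarith) (by linarith) hp hk
    _ ≤ weightedPowIntegral F p T t := by
        rw [← weightedPowIntegral_add_setLIntegral (a := t / 2) (by linarith) (by linarith)]
        exact le_add_self

end weightedPowIntegral

local notation "ℝ^" d => EuclideanSpace ℝ (Fin d)

def HeatKernelLowerBound (d : ℕ) (α β c₁ : ℝ) (G : ℝ → (ℝ^d) → ℝ) : Prop :=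
  ∀ t : ℝ, 0 < t → ∀ x : ℝ^d, c₁ * min (t ^ (-(β * d) / α)) (t ^ β / ‖x‖ ^ ((d : ℝ) + α)) ≤ G t x

def IsMildSolution {d : ℕ} (G : ℝ → (ℝ^d) → ℝ) (η : ℝ) (V₀ : (ℝ^d) → ℝ)
    (V : ℝ → (ℝ^d) → ℝ≥0∞) : Prop :=
  ∀ t : ℝ, 0 < t → ∀ x : ℝ^d,
    V t x = (∫⁻ y, ENNReal.ofReal (G t (x - y)) * ENNReal.ofReal (V₀ y)) +
      ∫⁻ s in Ioo (0 : ℝ) t, ∫⁻ y, ENNReal.ofReal (G (t - s) (x - y)) * V s y ^ (1 + η)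

noncomputable def parabolicMass {d : ℕ} (κ : ℝ) (V : ℝ → (ℝ^d) → ℝ≥0∞) (s : ℝ) : ℝ≥0∞ :=
  ∫⁻ y in ball (0 : ℝ^d) (s ^ κ), V s y

section MildSolution

variable {d : ℕ} {α β η c₁ : ℝ} {G : ℝ → (ℝ^d) → ℝ} {V₀ : (ℝ^d) → ℝ} {V : ℝ → (ℝ^d) → ℝ≥0∞}

theorem volume_ball_zero_rpow {s : ℝ} (hs : 0 < s) (κ : ℝ) :
    volume (ball (0 : ℝ^d) (s ^ κ)) = ENNReal.ofReal (s ^ (κ * d)) * volume (ball (0 : ℝ^d) 1) := by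
  rw [Measure.addHaar_ball_of_pos _ _ (Real.rpow_pos_of_pos hs κ), finrank_euclideanSpace_fin,
    ← Real.rpow_natCast, ← Real.rpow_mul hs.le]

theorem mul_le_parabolicMass {κ s : ℝ} {X : ℝ≥0∞} (hs : 0 < s)
    (h : ∀ y ∈ ball (0 : ℝ^d) (s ^ κ), ENNReal.ofReal (s ^ (-(κ * d))) * X ≤ V s y) :
    volume (ball (0 : ℝ^d) 1) * X ≤ parabolicMass κ V s := by
  calc volume (ball (0 : ℝ^d) 1) * X
      = ∫⁻ _ in ball (0 : ℝ^d) (s ^ κ), ENNReal.ofReal (s ^ (-(κ * d))) * X := by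
        rw [setLIntegral_const, volume_ball_zero_rpow hs,
          show ∀ a b c e : ℝ≥0∞, a * b * (c * e) = a * c * (e * b) from fun _ _ _ _ => by ring,
          ← ENNReal.ofReal_mul (by positivity), ← Real.rpow_add hs, neg_add_cancel,
          Real.rpow_zero, ENNReal.ofReal_one, one_mul]
    _ ≤ parabolicMass κ V s := setLIntegral_mono' measurableSet_ball h

theorem parabolicMass_rpow_le {κ s : ℝ} (hVs : Measurable (V s)) (hη : 0 < η) (hs : 1 ≤ s)
    (hκ : η * (κ * d) ≤ 1) :
    (volume (ball (0 : ℝ^d) 1) ^ η)⁻¹ * (ENNReal.ofReal s⁻¹ * parabolicMass κ V s ^ (1 + η)) ≤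
      ∫⁻ y in ball (0 : ℝ^d) (s ^ κ), V s y ^ (1 + η) := by
  have hs0 : 0 < s := one_pos.trans_le hs
  have hinv : ENNReal.ofReal s⁻¹ ≤ (ENNReal.ofReal (s ^ (κ * d * η)))⁻¹ := by
    rw [← ENNReal.ofReal_inv_of_pos (by positivity)]
    refine ENNReal.ofReal_le_ofReal (inv_anti₀ (by positivity) ?_)
    calc s ^ (κ * d * η) ≤ s ^ (1 : ℝ) := Real.rpow_le_rpow_of_exponent_le hs (by linarith)
      _ = s := Real.rpow_one s
  set ω := volume (ball (0 : ℝ^d) 1)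
  calc (ω ^ η)⁻¹ * (ENNReal.ofReal s⁻¹ * parabolicMass κ V s ^ (1 + η))
      = parabolicMass κ V s ^ (1 + η) * (ENNReal.ofReal s⁻¹ * (ω ^ η)⁻¹) := by ring
    _ ≤ parabolicMass κ V s ^ (1 + η) * ((ENNReal.ofReal (s ^ (κ * d * η)))⁻¹ * (ω ^ η)⁻¹) := by
        gcongr
    _ = (∫⁻ y in ball (0 : ℝ^d) (s ^ κ), V s y) ^ (1 + η) /
          (volume.restrict (ball (0 : ℝ^d) (s ^ κ))) univ ^ η := by
        rw [Measure.restrict_apply_univ, volume_ball_zero_rpow hs0,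
          ENNReal.mul_rpow_of_nonneg _ _ hη.le, ENNReal.ofReal_rpow_of_nonneg (by positivity) hη.le,
          ← Real.rpow_mul hs0.le, div_eq_mul_inv,
          ENNReal.mul_inv (Or.inr (ENNReal.rpow_ne_top_of_nonneg hη.le measure_ball_lt_top.ne))
            (Or.inl ENNReal.ofReal_ne_top)]
        rfl
    _ ≤ ∫⁻ y in ball (0 : ℝ^d) (s ^ κ), V s y ^ (1 + η) :=
        lintegral_rpow_one_add_div_le _ hVs.aemeasurable hη

theorem HeatKernelLowerBound.le_apply (hG : HeatKernelLowerBound d α β c₁ G) (hα : 0 < α)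
    (hβ : 0 ≤ β) (hc₁ : 0 ≤ c₁) {t u : ℝ} (ht : 0 < t) (htu : t / 2 ≤ u) (hut : u ≤ t)
    {z : ℝ^d} (hz : z ≠ 0) (hzt : ‖z‖ ≤ 2 * t ^ (β / α)) :
    c₁ * 2 ^ (-(β + d + α)) * t ^ (-(β / α * d)) ≤ G u z := by
  rw [mul_assoc]
  exact (mul_le_mul_of_nonneg_left (two_rpow_mul_rpow_le_min hα hβ d.cast_nonneg ht htu hut
    (norm_pos_iff.2 hz) hzt) hc₁).trans (hG u (by linarith) z)

theorem HeatKernelLowerBound.setLIntegral_ball_le [NeZero d]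
    (hG : HeatKernelLowerBound d α β c₁ G) (hα : 0 < α) (hβ : 0 ≤ β) (hc₁ : 0 ≤ c₁) {t u : ℝ}
    (ht : 0 < t) (htu : t / 2 ≤ u) (hut : u ≤ t) {x : ℝ^d} (hx : ‖x‖ ≤ t ^ (β / α)) {r : ℝ}
    (hr : r ≤ t ^ (β / α)) (f : (ℝ^d) → ℝ≥0∞) :
    ENNReal.ofReal (c₁ * 2 ^ (-(β + d + α)) * t ^ (-(β / α * d))) * ∫⁻ y in ball 0 r, f y ≤
      ∫⁻ y, ENNReal.ofReal (G u (x - y)) * f y := by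
  rw [← lintegral_const_mul' _ _ ENNReal.ofReal_ne_top]
  refine (lintegral_mono_ae ?_).trans (setLIntegral_le_lintegral _ _)
  filter_upwards [ae_restrict_of_ae (Measure.ae_ne volume x), ae_restrict_mem measurableSet_ball]
    with y hyx hy
  gcongr
  refine hG.le_apply hα hβ hc₁ ht htu hut (sub_ne_zero.2 hyx.symm) ?_
  rw [mem_ball_zero_iff] at hy
  linarith [norm_sub_le x y]

theorem IsMildSolution.initial_le [NeZero d] (hV : IsMildSolution G η V₀ V)
    (hG : HeatKernelLowerBound d α β c₁ G) (hα : 0 < α) (hβ : 0 ≤ β) (hc₁ : 0 ≤ c₁) {t R : ℝ}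
    (ht : 0 < t) (hR : R ≤ t ^ (β / α)) {x : ℝ^d} (hx : ‖x‖ ≤ t ^ (β / α)) :
    ENNReal.ofReal (t ^ (-(β / α * d))) * (ENNReal.ofReal (c₁ * 2 ^ (-(β + d + α))) *
      ∫⁻ y in ball 0 R, ENNReal.ofReal (V₀ y)) ≤ V t x := by
  rw [hV t ht x, ← mul_assoc, ← ENNReal.ofReal_mul (by positivity), mul_comm (t ^ _)]
  exact (hG.setLIntegral_ball_le hα hβ hc₁ ht (by linarith) le_rfl hx hR _).trans le_self_add

theorem IsMildSolution.duhamel_le [NeZero d] (hV : IsMildSolution G η V₀ V)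
    (hG : HeatKernelLowerBound d α β c₁ G) (hVmeas : Measurable (Function.uncurry V))
    (hα : 0 < α) (hβ : 0 ≤ β) (hc₁ : 0 ≤ c₁) (hη : 0 < η) (hηd : η * (β / α * d) ≤ 1)
    {T t : ℝ} (hT : 1 ≤ T) (ht : 2 * T ≤ t) {x : ℝ^d} (hx : ‖x‖ ≤ t ^ (β / α)) :
    ENNReal.ofReal (t ^ (-(β / α * d))) * (ENNReal.ofReal (c₁ * 2 ^ (-(β + d + α))) *
      ((volume (ball (0 : ℝ^d) 1) ^ η)⁻¹ *
        weightedPowIntegral (parabolicMass (β / α) V) (1 + η) T (t / 2))) ≤ V t x := by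
  have ht0 : 0 < t := by linarith
  rw [hV t ht0 x, ← mul_assoc, ← ENNReal.ofReal_mul (by positivity), mul_comm (t ^ _),
    weightedPowIntegral,
    ← lintegral_const_mul' _ _ (by simp [hη.le, (measure_ball_pos volume (0 : ℝ^d) one_pos).ne']),
    ← lintegral_const_mul' _ _ ENNReal.ofReal_ne_top]
  refine le_add_left ?_
  calc _ ≤ ∫⁻ s in Ioc T (t / 2), ∫⁻ y, ENNReal.ofReal (G (t - s) (x - y)) * V s y ^ (1 + η) :=
        setLIntegral_mono' measurableSet_Ioc fun s hs => ?_
    _ ≤ _ := lintegral_mono_set (Ioc_subset_Ioo_right (by linarith) |>.trans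
        (Ioo_subset_Ioo_left (by linarith)))
  have hs0 : 0 < s := by linarith [hs.1]
  refine (mul_le_mul_right (parabolicMass_rpow_le (hVmeas.comp measurable_prodMk_left) hη
    (hT.trans hs.1.le) hηd) _).trans ?_
  exact hG.setLIntegral_ball_le hα hβ hc₁ ht0 (by linarith [hs.2]) (by linarith)
    hx (Real.rpow_le_rpow hs0.le (by linarith [hs.2]) (by positivity)) _

theorem IsMildSolution.tendsto_rpow_neg_mul_weightedPowIntegral [NeZero d]
    (hV : IsMildSolution G η V₀ V) (hG : HeatKernelLowerBound d α β c₁ G)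
    (hVmeas : Measurable (Function.uncurry V)) (hα : 0 < α) (hβ : 0 < β) (hc₁ : 0 < c₁)
    (hη : 0 < η) (hηd : η * (β / α * d) ≤ 1) {R : ℝ} (hR : 1 ≤ R)
    (hA : ∫⁻ y in ball 0 R, ENNReal.ofReal (V₀ y) ≠ 0) :
    Tendsto (fun t => ENNReal.ofReal (t ^ (-(β / α * d))) *
      weightedPowIntegral (parabolicMass (β / α) V) (1 + η) (R ^ (β / α)⁻¹) t) atTop (𝓝 ⊤) := by
  set κ := β / α
  set c := c₁ * 2 ^ (-(β + d + α))
  set ω := volume (ball (0 : ℝ^d) 1)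
  set T := R ^ κ⁻¹
  have hω : ω ≠ 0 := (measure_ball_pos volume _ one_pos).ne'
  have hωtop : ω ≠ ⊤ := measure_ball_lt_top.ne
  have hc : ENNReal.ofReal c ≠ 0 := (ENNReal.ofReal_pos.2 (by positivity)).ne'
  have hT : 1 ≤ T := Real.one_le_rpow hR (by positivity)
  have hmass₀ : ∀ s, T ≤ s →
      ω * (ENNReal.ofReal c * ∫⁻ y in ball 0 R, ENNReal.ofReal (V₀ y)) ≤ parabolicMass κ V s :=
    fun s hs => mul_le_parabolicMass (by linarith) fun y hy =>
      hV.initial_le hG hα hβ.le hc₁.le (by linarith)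
        ((Real.rpow_inv_le_iff_of_pos (by linarith) (by linarith) (by positivity)).1 hs)
        (mem_ball_zero_iff.1 hy).le
  have hmass₁ : ∀ s, 2 * T ≤ s → ω * ENNReal.ofReal c * (ω ^ η)⁻¹ *
      weightedPowIntegral (parabolicMass κ V) (1 + η) T (s / 2) ≤ parabolicMass κ V s :=
    fun s hs => by
      simpa only [mul_assoc] using mul_le_parabolicMass (by linarith) fun y hy =>
        hV.duhamel_le hG hVmeas hα hβ.le hc₁.le hη hηd hT hs (mem_ball_zero_iff.1 hy).le
  exact tendsto_rpow_neg_mul_of_rpow_recursion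
    (tendsto_weightedPowIntegral_nhds_top (mul_ne_zero hω (mul_ne_zero hc hA)) (by linarith)
      (by linarith) hmass₀)
    (by simp [hω, hωtop, hc, ENNReal.rpow_eq_zero_iff, show 0 ≤ 1 + η by linarith]) hη
    (fun t ht => mul_rpow_weightedPowIntegral_div_four_le (by linarith) (by linarith) hmass₁ ht)
    (by positivity)

end MildSolution

theorem mild_solution_eventually_large_general
    (d : ℕ) (hd : 1 ≤ d) (α β η : ℝ)
    (hα : α ∈ Set.Ioo (0 : ℝ) 2) (hβ : β ∈ Set.Ioo (0 : ℝ) 1)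
    (hη : 0 < η) (hηc : η ≤ α / (β * d))
    (G : ℝ → EuclideanSpace ℝ (Fin d) → ℝ)
    (c₁ : ℝ) (hc₁ : 0 < c₁)
    (hGlower : ∀ t : ℝ, 0 < t → ∀ x : EuclideanSpace ℝ (Fin d),
      c₁ * min (t ^ (-(β * d) / α)) (t ^ β / ‖x‖ ^ ((d : ℝ) + α)) ≤ G t x)
    (V₀ : EuclideanSpace ℝ (Fin d) → ℝ)
    (hV₀meas : Measurable V₀) (hV₀nonneg : ∀ x, 0 ≤ V₀ x)
    (hV₀ne : ¬ (V₀ =ᵐ[volume] 0))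
    (V : ℝ → EuclideanSpace ℝ (Fin d) → ℝ≥0∞)
    (hVmeas : Measurable (Function.uncurry V))
    (hmild : ∀ t : ℝ, 0 < t → ∀ x : EuclideanSpace ℝ (Fin d),
      V t x
        = (∫⁻ y, ENNReal.ofReal (G t (x - y)) * ENNReal.ofReal (V₀ y))
          + ∫⁻ s in Set.Ioo (0 : ℝ) t,
              ∫⁻ y, ENNReal.ofReal (G (t - s) (x - y)) * (V s y) ^ (1 + η)) :
    ∀ M : ℝ, 0 < M → ∃ T₀ : ℝ, 0 < T₀ ∧
      ∀ t : ℝ, T₀ ≤ t → ∀ x : EuclideanSpace ℝ (Fin d), ‖x‖ ≤ t ^ (β / α) →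
        ENNReal.ofReal M ≤ V t x := by
  intro M _
  have : NeZero d := ⟨by omega⟩
  have hG : HeatKernelLowerBound d α β c₁ G := hGlower
  have hV : IsMildSolution G η V₀ V := hmild
  obtain ⟨hα, -⟩ := hα
  obtain ⟨hβ, -⟩ := hβ
  have hηd : η * (β / α * d) ≤ 1 :=
    calc η * (β / α * d) ≤ α / (β * d) * (β / α * d) := by gcongr
      _ = 1 := by field_simp
  obtain ⟨R, hR, hA⟩ := exists_setLIntegral_ball_ofReal_ne_zero hV₀meas hV₀nonneg hV₀ne 0
  have hT : 1 ≤ R ^ (β / α)⁻¹ := Real.one_le_rpow hR (by positivity)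
  have hlim := tendsto_rpow_neg_mul_const_mul_div_two
    (hV.tendsto_rpow_neg_mul_weightedPowIntegral hG hVmeas hα hβ hc₁ hη hηd hR hA)
    (a := ENNReal.ofReal (c₁ * 2 ^ (-(β + d + α))) * (volume (ball (0 : ℝ^d) 1) ^ η)⁻¹)
    (mul_ne_zero (ENNReal.ofReal_pos.2 (by positivity)).ne'
      (ENNReal.inv_ne_zero.2 (ENNReal.rpow_ne_top_of_nonneg hη.le measure_ball_lt_top.ne)))
  obtain ⟨T₀, hT₀⟩ := eventually_atTop.1 (hlim.eventually_const_le (ofReal_lt_top (r := M)))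
  refine ⟨max T₀ (2 * R ^ (β / α)⁻¹), by positivity, fun t ht x hx => ?_⟩
  calc ENNReal.ofReal M ≤ _ := hT₀ t ((le_max_left _ _).trans ht)
    _ ≤ V t x := by
        simpa only [mul_assoc] using hV.duhamel_le hG hVmeas hα hβ.le hc₁.le hη hηd hT
          ((le_max_right _ _).trans ht) hx

/-- Proposition 3.1. For `0 < η ≤ α/(βd)`, a mild solution with
non-trivial nonnegative initial data eventually exceeds every level `M` on the
ball `|x| ≤ t^{β/α}`. -/
theorem mild_solution_eventually_large
    (d : ℕ) (hd : 1 ≤ d) (α β η : ℝ)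
    (hα : α ∈ Set.Ioo (0 : ℝ) 2) (hβ : β ∈ Set.Ioo (0 : ℝ) 1)
    (hη : 0 < η) (hηc : η ≤ α / (β * d))
    (G : ℝ → EuclideanSpace ℝ (Fin d) → ℝ)
    (hGmeas : Measurable (Function.uncurry G))
    (hGnonneg : ∀ t x, 0 ≤ G t x)
    (c₁ : ℝ) (hc₁ : 0 < c₁)
    (hGlower : ∀ t : ℝ, 0 < t → ∀ x : EuclideanSpace ℝ (Fin d),
      c₁ * min (t ^ (-(β * d) / α)) (t ^ β / ‖x‖ ^ ((d : ℝ) + α)) ≤ G t x)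
    (V₀ : EuclideanSpace ℝ (Fin d) → ℝ)
    (hV₀meas : Measurable V₀) (hV₀nonneg : ∀ x, 0 ≤ V₀ x)
    (hV₀ne : ¬ (V₀ =ᵐ[volume] 0))
    (V : ℝ → EuclideanSpace ℝ (Fin d) → ℝ≥0∞)
    (hVmeas : Measurable (Function.uncurry V))
    (hmild : ∀ t : ℝ, 0 < t → ∀ x : EuclideanSpace ℝ (Fin d),
      V t x
        = (∫⁻ y, ENNReal.ofReal (G t (x - y)) * ENNReal.ofReal (V₀ y))
          + ∫⁻ s in Set.Ioo (0 : ℝ) t,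
              ∫⁻ y, ENNReal.ofReal (G (t - s) (x - y)) * (V s y) ^ (1 + η)) :
    ∀ M : ℝ, 0 < M → ∃ T₀ : ℝ, 0 < T₀ ∧
      ∀ t : ℝ, T₀ ≤ t → ∀ x : EuclideanSpace ℝ (Fin d), ‖x‖ ≤ t ^ (β / α) →
        ENNReal.ofReal M ≤ V t x :=
  mild_solution_eventually_large_general d hd α β η hα hβ hη hηc G c₁ hc₁ hGlower V₀ hV₀meas
    hV₀nonneg hV₀ne V hVmeas hmild
end
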